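/- arXiv:2001.02949 — 5 statements merged into one kernel-verified Lean document; each statement's English description precedes it below -/
import Mathlib

section
/- Let n ≥ 2 and let w̄ : ℝ^{n×n} → ℝ be such that for every A ∈ ℝ^{n×n} the function z ↦ w̄(|Az| I) is integrable on S^{n−1} with respect to H^{n−1}, where I is the n×n identity matrix. Then the following are equivalent: (i) there exists w̃ : [0,∞) → ℝ such that for every A ∈ ℝ^{n×n} the function z ↦ w̃(|Az|) is integrable on S^{n−1} and w̄(A) = ∫_{S^{n−1}} w̃(|Az|) dH^{n−1}(z); (ii) for every A ∈ ℝ^{n×n}, w̄(A) = ⨍_{S^{n−1}} w̄(|Az| I) dH^{n−1}(z). Moreover, in case (ii) holds, the function w̃(t) = w̄(t I)/σ_{n−1} realizes the representation in (i). -/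
open MeasureTheory Metric
open scoped ENNReal NNReal

noncomputable section

/-- The special orthogonal group `SO(k)`, viewed as a set of `k × k` real matrices. -/
def SO (k : ℕ) : Set (Matrix (Fin k) (Fin k) ℝ) :=
  {R | R * R.transpose = 1 ∧ R.det = 1}

/-- The Frobenius norm of a real matrix. -/
def frob {m n : ℕ} (A : Matrix (Fin m) (Fin n) ℝ) : ℝ :=
  Real.sqrt (∑ i, ∑ j, A i j ^ 2)

/-- The cofactor matrix of a `3 × 3` matrix: the transpose of the adjugate,
so that `A * (cof A)ᵀ = (det A) • 1`. -/
def cof (A : Matrix (Fin 3) (Fin 3) ℝ) : Matrix (Fin 3) (Fin 3) ℝ :=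
  (Matrix.adjugate A).transpose

/-- The unit sphere `S^{n-1}` in `ℝ^n`. -/
def unitSphere (n : ℕ) : Set (EuclideanSpace ℝ (Fin n)) :=
  sphere (0 : EuclideanSpace ℝ (Fin n)) 1

/-- The open unit cube `(0,1)^n` in `ℝ^n`. -/
def unitCube (n : ℕ) : Set (EuclideanSpace ℝ (Fin n)) :=
  {x | ∀ i, x i ∈ Set.Ioo (0 : ℝ) 1}

/-- The Jacobian matrix `Dv(x)` of a map `v : ℝ^n → ℝ^m` at the point `x`:
its `(i, j)` entry is `∂v_i/∂x_j (x)`. -/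
def jac {n m : ℕ} (v : EuclideanSpace ℝ (Fin n) → EuclideanSpace ℝ (Fin m))
    (x : EuclideanSpace ℝ (Fin n)) : Matrix (Fin m) (Fin n) ℝ :=
  Matrix.of fun i j => fderiv ℝ v x (EuclideanSpace.single j 1) i

/-- Quasiconvexity in the sense of Morrey: `ψ A ≤ ∫_{(0,1)^n} ψ(A + Dv(x)) dx` for every
matrix `A` and every smooth map `v` with compact support contained in `(0,1)^n`. -/
def MorreyQuasiconvex {n m : ℕ} (ψ : Matrix (Fin m) (Fin n) ℝ → ℝ) : Prop :=
  ∀ (A : Matrix (Fin m) (Fin n) ℝ) (v : EuclideanSpace ℝ (Fin n) → EuclideanSpace ℝ (Fin m)),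
    ContDiff ℝ (⊤ : ℕ∞) v → HasCompactSupport v → tsupport v ⊆ unitCube n →
    ψ A ≤ ∫ x in unitCube n, ψ (A + jac v x)

/-- Strict quasiconvexity in the sense of Morrey: the inequality is strict whenever
the test map `v` is not identically zero. -/
def StrictMorreyQuasiconvex {n m : ℕ} (ψ : Matrix (Fin m) (Fin n) ℝ → ℝ) : Prop :=
  ∀ (A : Matrix (Fin m) (Fin n) ℝ) (v : EuclideanSpace ℝ (Fin n) → EuclideanSpace ℝ (Fin m)),
    ContDiff ℝ (⊤ : ℕ∞) v → HasCompactSupport v → tsupport v ⊆ unitCube n → v ≠ 0 →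
    ψ A < ∫ x in unitCube n, ψ (A + jac v x)

/-- The quasiconvexification (quasiconvex envelope) of `ψ`:
`ψ^{qc}(A) = sup { v(A) : v quasiconvex, v ≤ ψ }`. -/
def qcEnvelope {n m : ℕ} (ψ : Matrix (Fin m) (Fin n) ℝ → ℝ)
    (A : Matrix (Fin m) (Fin n) ℝ) : ℝ :=
  sSup {r | ∃ v : Matrix (Fin m) (Fin n) ℝ → ℝ,
    MorreyQuasiconvex v ∧ (∀ B, v B ≤ ψ B) ∧ v A = r}

lemma my_coord_le_norm {m : ℕ} (x : EuclideanSpace ℝ (Fin m)) (i : Fin m) : |x i| ≤ ‖x‖ := by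
  rw [EuclideanSpace.norm_eq, ← Real.sqrt_sq_eq_abs]
  apply Real.sqrt_le_sqrt
  have : x i ^ 2 = ‖x i‖ ^ 2 := by rw [Real.norm_eq_abs, sq_abs]
  rw [this]
  exact Finset.single_le_sum (f := fun j => ‖x j‖ ^ 2) (fun j _ => sq_nonneg _)
    (Finset.mem_univ i)

lemma my_radialLip {E : Type*} [NormedAddCommGroup E] [NormedSpace ℝ E] :
    LipschitzOnWith 2 (fun x : E => ‖x‖⁻¹ • x) {x : E | 1 ≤ ‖x‖} := by
  apply LipschitzOnWith.of_dist_le_mul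
  intro x hx y hy
  simp only [Set.mem_setOf_eq] at hx hy
  have hx0 : (0:ℝ) < ‖x‖ := lt_of_lt_of_le one_pos hx
  have hy0 : (0:ℝ) < ‖y‖ := lt_of_lt_of_le one_pos hy
  rw [dist_eq_norm, dist_eq_norm]
  have hsplit : ‖x‖⁻¹ • x - ‖y‖⁻¹ • y = ‖x‖⁻¹ • (x - y) + (‖x‖⁻¹ - ‖y‖⁻¹) • y := by
    rw [smul_sub, sub_smul]; abel
  rw [hsplit]
  have hxinv : ‖x‖⁻¹ ≤ 1 := by
    rw [inv_le_one_iff₀]; right; exact hx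
  have h1 : ‖‖x‖⁻¹ • (x - y)‖ ≤ ‖x - y‖ := by
    rw [norm_smul, Real.norm_eq_abs, abs_of_nonneg (by positivity)]
    nlinarith [norm_nonneg (x - y)]
  have h2 : ‖(‖x‖⁻¹ - ‖y‖⁻¹) • y‖ ≤ ‖x - y‖ := by
    rw [norm_smul, Real.norm_eq_abs]
    have heq : ‖x‖⁻¹ - ‖y‖⁻¹ = (‖y‖ - ‖x‖) * (‖x‖⁻¹ * ‖y‖⁻¹) := by field_simp
    rw [heq, abs_mul, abs_of_nonneg (by positivity : (0:ℝ) ≤ ‖x‖⁻¹ * ‖y‖⁻¹)]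
    have h3 : |‖y‖ - ‖x‖| ≤ ‖x - y‖ := by
      rw [abs_sub_comm]; exact abs_norm_sub_norm_le x y
    calc |‖y‖ - ‖x‖| * (‖x‖⁻¹ * ‖y‖⁻¹) * ‖y‖
        = |‖y‖ - ‖x‖| * ‖x‖⁻¹ * (‖y‖⁻¹ * ‖y‖) := by ring
      _ = |‖y‖ - ‖x‖| * ‖x‖⁻¹ := by rw [inv_mul_cancel₀ hy0.ne']; ring
      _ ≤ ‖x - y‖ * 1 := by
          apply mul_le_mul h3 hxinv (by positivity) (norm_nonneg _)
      _ = ‖x - y‖ := mul_one _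
  calc ‖‖x‖⁻¹ • (x - y) + (‖x‖⁻¹ - ‖y‖⁻¹) • y‖
      ≤ ‖‖x‖⁻¹ • (x - y)‖ + ‖(‖x‖⁻¹ - ‖y‖⁻¹) • y‖ := norm_add_le _ _
    _ ≤ ‖x - y‖ + ‖x - y‖ := add_le_add h1 h2
    _ = (2:ℝ≥0) * ‖x - y‖ := by push_cast; ring


lemma my_sphere_ne_top (d : ℕ) :
    μH[(d:ℝ)] (sphere (0 : EuclideanSpace ℝ (Fin (d+1))) 1) ≠ ⊤ := by
  set E := EuclideanSpace ℝ (Fin (d+1)) with hE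
  set P := (Fin d → ℝ) with hP
  set B : Set P := Metric.closedBall 0 1 with hBdef
  -- the coordinate insertion map, Lipschitz as map into EuclideanSpace
  set g : Fin (d+1) → ℝ → P → E :=
    fun i s y => (WithLp.equiv 2 (Fin (d+1) → ℝ)).symm (i.insertNth s y) with hg
  set κ : ℝ≥0 := ((d+1 : ℕ) : ℝ≥0) ^ ((1 / (2:ℝ≥0∞)).toReal) with hκ
  have hsymm : LipschitzWith κ ((WithLp.equiv 2 (Fin (d+1) → ℝ)).symm) := by
    have := (PiLp.antilipschitzWith_ofLp 2 (fun _ : Fin (d+1) => ℝ))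
    simpa [hκ] using this.to_rightInverse (WithLp.equiv 2 (Fin (d+1) → ℝ)).apply_symm_apply
  have hins : ∀ (i : Fin (d+1)) (s : ℝ), LipschitzWith 1 (fun y : P => (i.insertNth s y : Fin (d+1) → ℝ)) := by
    intro i s
    apply LipschitzWith.of_dist_le_mul
    intro y y'
    rw [NNReal.coe_one, one_mul, dist_pi_le_iff dist_nonneg]
    intro j
    rcases eq_or_ne j i with rfl | hj
    · show dist ((j.insertNth s y : Fin (d+1) → ℝ) j) ((j.insertNth s y' : Fin (d+1) → ℝ) j) ≤ dist y y'
      rw [Fin.insertNth_apply_same, Fin.insertNth_apply_same, dist_self]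
      exact dist_nonneg
    · obtain ⟨k, rfl⟩ := Fin.exists_succAbove_eq hj
      show dist ((i.insertNth s y : Fin (d+1) → ℝ) (i.succAbove k)) ((i.insertNth s y' : Fin (d+1) → ℝ) (i.succAbove k)) ≤ dist y y'
      rw [Fin.insertNth_apply_succAbove, Fin.insertNth_apply_succAbove]
      exact dist_le_pi_dist y y' k
  have hglip : ∀ i s, LipschitzWith (κ * 1) (g i s) := fun i s => hsymm.comp (hins i s)
  have hmaps : ∀ (i : Fin (d+1)) (s : ℝ), |s| = 1 →
      Set.MapsTo (g i s) B {x : E | 1 ≤ ‖x‖} := by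
    intro i s hs y _
    simp only [Set.mem_setOf_eq]
    have h1 : |(g i s y) i| ≤ ‖g i s y‖ := my_coord_le_norm _ _
    have h2 : (g i s y) i = s := by
      simp [hg, Fin.insertNth_apply_same]
    rw [h2, hs] at h1
    exact h1
  set f : E → E := fun x => ‖x‖⁻¹ • x with hf
  set Φ : Fin (d+1) → ℝ → P → E := fun i s => f ∘ (g i s) with hΦ
  have hΦlip : ∀ i s, |s| = 1 → LipschitzOnWith (2 * (κ * 1)) (Φ i s) B := by
    intro i s hs
    exact my_radialLip.comp ((hglip i s).lipschitzOnWith) (hmaps i s hs)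
  -- covering
  have cover : sphere (0:E) 1 ⊆ ⋃ i : Fin (d+1), (Φ i 1 '' B ∪ Φ i (-1) '' B) := by
    intro z hz
    have hz1 : ‖z‖ = 1 := by simpa using mem_sphere_zero_iff_norm.1 hz
    obtain ⟨i, -, hi⟩ := Finset.exists_max_image Finset.univ (fun j => |z j|)
      ⟨0, Finset.mem_univ 0⟩
    have hi' : ∀ j, |z j| ≤ |z i| := fun j => hi j (Finset.mem_univ j)
    have hm : 0 < |z i| := by
      by_contra h
      push_neg at h
      have hzero : ∀ j, z j = 0 := by
        intro j
        have := (hi' j).trans h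
        exact abs_nonpos_iff.1 this
      have : ‖z‖ = 0 := by
        rw [EuclideanSpace.norm_eq]
        simp [hzero]
      rw [this] at hz1; norm_num at hz1
    set m : ℝ := |z i| with hmdef
    have key : ∀ s : ℝ, z i = s * m → z ∈ Φ i s '' B := by
      intro s hzi
      refine ⟨fun k => m⁻¹ * z (i.succAbove k), ?_, ?_⟩
      · rw [hBdef, Metric.mem_closedBall, dist_zero_right]
        rw [pi_norm_le_iff_of_nonneg zero_le_one]
        intro k
        rw [Real.norm_eq_abs, abs_mul, abs_of_nonneg (by positivity : (0:ℝ) ≤ m⁻¹)]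
        calc m⁻¹ * |z (i.succAbove k)| ≤ m⁻¹ * m := by
              apply mul_le_mul_of_nonneg_left (hi' _) (by positivity)
          _ = 1 := inv_mul_cancel₀ hm.ne'
      · have hs1 : |s| = 1 := by
          have : |z i| = |s| * m := by rw [hzi, abs_mul, abs_of_pos hm]
          rw [← hmdef] at this
          nlinarith [abs_nonneg s]
        have hgz : g i s (fun k => m⁻¹ * z (i.succAbove k)) = m⁻¹ • z := by
          apply (WithLp.equiv 2 (Fin (d+1) → ℝ)).injective
          funext j
          rcases eq_or_ne j i with rfl | hj
          · simp only [hg, Equiv.apply_symm_apply, Fin.insertNth_apply_same]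
            show s = (m⁻¹ • z) j
            rw [PiLp.smul_apply, hzi, smul_eq_mul]
            field_simp
          · obtain ⟨k, rfl⟩ := Fin.exists_succAbove_eq hj
            simp only [hg, Equiv.apply_symm_apply, Fin.insertNth_apply_succAbove]
            show m⁻¹ * z (i.succAbove k) = (m⁻¹ • z) (i.succAbove k)
            rw [PiLp.smul_apply, smul_eq_mul]
        show Φ i s (fun k => m⁻¹ * z (i.succAbove k)) = z
        rw [hΦ]
        simp only [Function.comp_apply]
        rw [hgz, hf]
        have hnorm : ‖m⁻¹ • z‖ = m⁻¹ := by
          rw [norm_smul, Real.norm_eq_abs, abs_of_nonneg (by positivity : (0:ℝ) ≤ m⁻¹), hz1,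
            mul_one]
        show ‖m⁻¹ • z‖⁻¹ • (m⁻¹ • z) = z
        rw [hnorm, smul_smul, inv_inv, mul_inv_cancel₀ hm.ne', one_smul]
    rcases le_or_gt 0 (z i) with hzi | hzi
    · have : z i = 1 * m := by rw [one_mul, hmdef, abs_of_nonneg hzi]
      exact Set.mem_iUnion.2 ⟨i, Or.inl (key 1 this)⟩
    · have : z i = (-1) * m := by rw [hmdef, abs_of_neg hzi]; ring
      exact Set.mem_iUnion.2 ⟨i, Or.inr (key (-1) this)⟩
  -- measure bound
  have hd0 : (0:ℝ) ≤ (d:ℝ) := Nat.cast_nonneg d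
  have hBmeas : μH[(d:ℝ)] B ≠ ⊤ := by
    have hpi : (μH[(d:ℝ)] : Measure P) = volume := by
      have := hausdorffMeasure_pi_real (ι := Fin d)
      simpa using this
    rw [hpi, hBdef]
    exact (isCompact_closedBall _ _).measure_lt_top.ne
  have himg : ∀ (i : Fin (d+1)) (s : ℝ), |s| = 1 → μH[(d:ℝ)] (Φ i s '' B) ≠ ⊤ := by
    intro i s hs
    have hle := (hΦlip i s hs).hausdorffMeasure_image_le hd0
    intro htop
    rw [htop] at hle
    have : ((2 * (κ * 1) : ℝ≥0) : ℝ≥0∞) ^ (d:ℝ) * μH[(d:ℝ)] B ≠ ⊤ := by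
      apply ENNReal.mul_ne_top _ hBmeas
      exact ENNReal.rpow_ne_top_of_nonneg hd0 ENNReal.coe_ne_top
    exact this (top_le_iff.1 hle)
  have hbound := measure_mono (μ := μH[(d:ℝ)]) cover
  intro htop
  rw [htop] at hbound
  have hfin : μH[(d:ℝ)] (⋃ i : Fin (d+1), (Φ i 1 '' B ∪ Φ i (-1) '' B)) ≠ ⊤ := by
    apply ne_top_of_le_ne_top _ (measure_iUnion_le _)
    rw [← lt_top_iff_ne_top]
    rw [tsum_fintype]
    apply ENNReal.sum_lt_top.2
    intro i _
    apply lt_of_le_of_lt (measure_union_le _ _)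
    rw [ENNReal.add_lt_top]
    constructor
    · exact (himg i 1 (by norm_num)).lt_top
    · exact (himg i (-1) (by norm_num)).lt_top
  exact hfin (top_le_iff.1 hbound)


lemma my_unitSphere_ne_top (n : ℕ) (hn : 1 ≤ n) :
    μH[(n:ℝ) - 1] (unitSphere n) ≠ ⊤ := by
  obtain ⟨d, rfl⟩ : ∃ d, n = d + 1 := ⟨n - 1, by omega⟩
  have h : ((d + 1 : ℕ) : ℝ) - 1 = (d : ℝ) := by push_cast; ring
  rw [h]
  exact my_sphere_ne_top d

/-- `w̄` comes from a radial pairwise density `w̃` via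
`w̄(A) = ∫_{S^{n-1}} w̃(|Az|) dH^{n-1}(z)` if and only if
`w̄(A) = ⨍_{S^{n-1}} w̄(|Az| I) dH^{n-1}(z)` for all `A`; in the latter case the
choice `w̃(t) = w̄(tI)/σ_{n-1}` realizes the representation. -/
theorem statement4 (n : ℕ) (hn : 2 ≤ n)
    (wbar : Matrix (Fin n) (Fin n) ℝ → ℝ)
    (hint : ∀ A : Matrix (Fin n) (Fin n) ℝ,
      IntegrableOn
        (fun z => wbar (‖Matrix.toEuclideanLin A z‖ • (1 : Matrix (Fin n) (Fin n) ℝ)))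
        (unitSphere n) μH[(n : ℝ) - 1]) :
    ((∃ wt : ℝ → ℝ, ∀ A : Matrix (Fin n) (Fin n) ℝ,
        IntegrableOn (fun z => wt ‖Matrix.toEuclideanLin A z‖) (unitSphere n) μH[(n : ℝ) - 1] ∧
        wbar A = ∫ z in unitSphere n, wt ‖Matrix.toEuclideanLin A z‖ ∂μH[(n : ℝ) - 1])
      ↔ (∀ A : Matrix (Fin n) (Fin n) ℝ,
          wbar A = ⨍ z in unitSphere n,
            wbar (‖Matrix.toEuclideanLin A z‖ • (1 : Matrix (Fin n) (Fin n) ℝ))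
              ∂μH[(n : ℝ) - 1]))
    ∧ ((∀ A : Matrix (Fin n) (Fin n) ℝ,
          wbar A = ⨍ z in unitSphere n,
            wbar (‖Matrix.toEuclideanLin A z‖ • (1 : Matrix (Fin n) (Fin n) ℝ))
              ∂μH[(n : ℝ) - 1]) →
        ∀ A : Matrix (Fin n) (Fin n) ℝ,
          IntegrableOn
            (fun z => wbar (‖Matrix.toEuclideanLin A z‖ • (1 : Matrix (Fin n) (Fin n) ℝ)) /
              (μH[(n : ℝ) - 1] (unitSphere n)).toReal) (unitSphere n) μH[(n : ℝ) - 1] ∧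
          wbar A = ∫ z in unitSphere n,
            wbar (‖Matrix.toEuclideanLin A z‖ • (1 : Matrix (Fin n) (Fin n) ℝ)) /
              (μH[(n : ℝ) - 1] (unitSphere n)).toReal ∂μH[(n : ℝ) - 1]) := by
  have hSmeas : MeasurableSet (unitSphere n) := by
    unfold unitSphere
    exact isClosed_sphere.measurableSet
  have hfin : μH[(n:ℝ) - 1] (unitSphere n) ≠ ⊤ := my_unitSphere_ne_top n (by omega)
  set σ : ℝ := (μH[(n:ℝ) - 1] (unitSphere n)).toReal with hσdef
  have hnormA : ∀ (t : ℝ), 0 ≤ t → ∀ z : EuclideanSpace ℝ (Fin n), z ∈ unitSphere n →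
      ‖Matrix.toEuclideanLin (t • (1 : Matrix (Fin n) (Fin n) ℝ)) z‖ = t := by
    intro t ht z hz
    have hz1 : ‖z‖ = 1 := mem_sphere_zero_iff_norm.1 hz
    have hlin : Matrix.toEuclideanLin (t • (1 : Matrix (Fin n) (Fin n) ℝ)) z = t • z := by
      rw [_root_.map_smul, LinearMap.smul_apply]
      congr 1
      rw [Matrix.toEuclideanLin_apply]
      simp [Matrix.one_mulVec]
    rw [hlin, norm_smul, Real.norm_eq_abs, abs_of_nonneg ht, hz1, mul_one]
  -- the backward implication + representation
  have key2 : (∀ A : Matrix (Fin n) (Fin n) ℝ,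
          wbar A = ⨍ z in unitSphere n,
            wbar (‖Matrix.toEuclideanLin A z‖ • (1 : Matrix (Fin n) (Fin n) ℝ))
              ∂μH[(n : ℝ) - 1]) →
      ∀ A : Matrix (Fin n) (Fin n) ℝ,
          IntegrableOn
            (fun z => wbar (‖Matrix.toEuclideanLin A z‖ • (1 : Matrix (Fin n) (Fin n) ℝ)) / σ)
            (unitSphere n) μH[(n : ℝ) - 1] ∧
          wbar A = ∫ z in unitSphere n,
            wbar (‖Matrix.toEuclideanLin A z‖ • (1 : Matrix (Fin n) (Fin n) ℝ)) / σ
              ∂μH[(n : ℝ) - 1] := by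
    intro hqc A
    refine ⟨(hint A).div_const _, ?_⟩
    rw [hqc A, setAverage_eq, integral_div, smul_eq_mul, inv_mul_eq_div, measureReal_def, ← hσdef]
  have fwd : (∃ wt : ℝ → ℝ, ∀ A : Matrix (Fin n) (Fin n) ℝ,
        IntegrableOn (fun z => wt ‖Matrix.toEuclideanLin A z‖) (unitSphere n) μH[(n : ℝ) - 1] ∧
        wbar A = ∫ z in unitSphere n, wt ‖Matrix.toEuclideanLin A z‖ ∂μH[(n : ℝ) - 1]) →
      (∀ A : Matrix (Fin n) (Fin n) ℝ,
          wbar A = ⨍ z in unitSphere n,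
            wbar (‖Matrix.toEuclideanLin A z‖ • (1 : Matrix (Fin n) (Fin n) ℝ))
              ∂μH[(n : ℝ) - 1]) := by
    rintro ⟨wt, hwt⟩ A
    have hBcalc : ∀ z ∈ unitSphere n,
        wbar (‖Matrix.toEuclideanLin A z‖ • (1 : Matrix (Fin n) (Fin n) ℝ))
          = σ * wt ‖Matrix.toEuclideanLin A z‖ := by
      intro z _
      rw [(hwt (‖Matrix.toEuclideanLin A z‖ • (1 : Matrix (Fin n) (Fin n) ℝ))).2]
      rw [setIntegral_congr_fun hSmeas
        (g := fun _ => wt ‖Matrix.toEuclideanLin A z‖)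
        (fun y hy => by simp only; rw [hnormA _ (norm_nonneg _) y hy])]
      rw [setIntegral_const, smul_eq_mul, measureReal_def, ← hσdef]
    rw [setAverage_eq, setIntegral_congr_fun hSmeas hBcalc, integral_const_mul, ← (hwt A).2,
      smul_eq_mul, measureReal_def, ← hσdef]
    rcases eq_or_ne (μH[(n:ℝ) - 1] (unitSphere n)) 0 with h0 | h0
    · have hwA : wbar A = 0 := by
        rw [(hwt A).2, Measure.restrict_eq_zero.2 h0, integral_zero_measure]
      rw [hwA, hσdef, h0]
      simp
    · have hσ : σ ≠ 0 := by
        rw [hσdef]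
        exact ENNReal.toReal_ne_zero.2 ⟨h0, hfin⟩
      field_simp
  exact ⟨⟨fwd, fun h => ⟨fun r => wbar (r • (1 : Matrix (Fin n) (Fin n) ℝ)) / σ, key2 h⟩⟩, key2⟩
end
end

section
/- Let n ≥ 2, let I ⊆ [0,∞) be an interval with nonempty interior, and let g : ℝ → ℝ be strictly convex on I. Then the function w̄(A) := g(|A|²) on ℝ^{n×n} does not satisfy the mean-value formula w̄(A) = ⨍_{S^{n−1}} w̄(|Az| I_n) dH^{n−1}(z) for all A ∈ ℝ^{n×n}; more precisely, there exists A ∈ ℝ^{n×n} such that g(|A|²) < ⨍_{S^{n−1}} g(n |Az|²) dH^{n−1}(z). -/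
open MeasureTheory Metric
open scoped ENNReal

noncomputable section

namespace S7

lemma normsq {k : ℕ} (u : EuclideanSpace ℝ (Fin k)) : ‖u‖^2 = ∑ j, u j ^ 2 := by
  rw [EuclideanSpace.norm_eq, Real.sq_sqrt (by positivity)]
  simp [Real.norm_eq_abs, sq_abs]

/-- graph map -/
def sgraph (m : ℕ) (x : EuclideanSpace ℝ (Fin m)) : EuclideanSpace ℝ (Fin (m+1)) :=
  (WithLp.equiv 2 _).symm (Fin.cons (Real.sqrt (1 - ‖x‖^2)) ((WithLp.equiv 2 _) x))

lemma sgraph_zero {m : ℕ} (x : EuclideanSpace ℝ (Fin m)) :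
    sgraph m x 0 = Real.sqrt (1 - ‖x‖^2) := rfl

lemma sgraph_succ {m : ℕ} (x : EuclideanSpace ℝ (Fin m)) (i : Fin m) :
    sgraph m x i.succ = x i := rfl

/-- projection dropping coordinate 0 -/
def sproj (m : ℕ) (z : EuclideanSpace ℝ (Fin (m+1))) : EuclideanSpace ℝ (Fin m) :=
  (WithLp.equiv 2 _).symm (fun i => z i.succ)

lemma sproj_apply {m : ℕ} (z : EuclideanSpace ℝ (Fin (m+1))) (i : Fin m) :
    sproj m z i = z i.succ := rfl

lemma normsq_succ {m : ℕ} (u : EuclideanSpace ℝ (Fin (m+1))) :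
    ‖u‖^2 = u 0 ^ 2 + ∑ i : Fin m, u i.succ ^ 2 := by
  rw [normsq, Fin.sum_univ_succ]

lemma normsq_sproj {m : ℕ} (z : EuclideanSpace ℝ (Fin (m+1))) :
    ‖sproj m z‖^2 = ‖z‖^2 - z 0 ^ 2 := by
  rw [normsq_succ, normsq]
  simp [sproj_apply]

lemma sproj_sgraph {m : ℕ} (x : EuclideanSpace ℝ (Fin m)) : sproj m (sgraph m x) = x := by
  ext i
  rw [sproj_apply, sgraph_succ]

lemma normsq_sgraph {m : ℕ} (x : EuclideanSpace ℝ (Fin m)) (hx : ‖x‖^2 ≤ 1) :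
    ‖sgraph m x‖^2 = 1 := by
  rw [normsq_succ, sgraph_zero, Real.sq_sqrt (by linarith)]
  have : ∑ i : Fin m, sgraph m x i.succ ^ 2 = ‖x‖^2 := by
    rw [normsq]; exact Finset.sum_congr rfl fun i _ => by rw [sgraph_succ]
  rw [this]; ring

lemma sgraph_eq {m : ℕ} (w : EuclideanSpace ℝ (Fin (m+1))) (hw : ‖w‖ = 1) (hw0 : 0 ≤ w 0) :
    sgraph m (sproj m w) = w := by
  ext j
  refine Fin.cases ?_ (fun i => ?_) j
  · rw [sgraph_zero, normsq_sproj, hw]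
    rw [show (1:ℝ) - ((1:ℝ)^2 - w 0 ^ 2) = w 0 ^ 2 by ring, Real.sqrt_sq hw0]
  · rw [sgraph_succ, sproj_apply]


lemma dist_sq {k : ℕ} (u v : EuclideanSpace ℝ (Fin k)) :
    dist u v ^ 2 = ∑ j, (u j - v j) ^ 2 := by
  rw [EuclideanSpace.dist_eq, Real.sq_sqrt (by positivity)]
  exact Finset.sum_congr rfl fun j _ => by rw [Real.dist_eq, sq_abs]

/-- the projection is 1-Lipschitz -/
lemma lipschitz_sproj (m : ℕ) : LipschitzWith 1 (sproj m) := by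
  apply LipschitzWith.of_dist_le_mul
  intro z w
  rw [NNReal.coe_one, one_mul]
  have h1 : dist (sproj m z) (sproj m w) ^ 2 ≤ dist z w ^ 2 := by
    rw [dist_sq, dist_sq, Fin.sum_univ_succ]
    have : ∑ j : Fin m, (sproj m z j - sproj m w j)^2
        = ∑ j : Fin m, (z j.succ - w j.succ)^2 :=
      Finset.sum_congr rfl fun j _ => by rw [sproj_apply, sproj_apply]
    rw [this]
    nlinarith [sq_nonneg (z 0 - w 0)]
  nlinarith [dist_nonneg (x := sproj m z) (y := sproj m w), dist_nonneg (x := z) (y := w)]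

/-- Haar instance transfer -/
lemma isAddHaar (k : ℕ) :
    Measure.IsAddHaarMeasure (μH[(k:ℝ)] : Measure (EuclideanSpace ℝ (Fin k))) := by
  have := @isAddHaarMeasure_hausdorffMeasure (EuclideanSpace ℝ (Fin k)) _ _ _ _ _
  simpa using this


/-- domain of the graph map -/
def sdom (m : ℕ) : Set (EuclideanSpace ℝ (Fin m)) :=
  {x | ‖x‖^2 ≤ 1 - 1/(m+1)}

lemma lipschitzOn_sgraph (m : ℕ) :
    LipschitzOnWith (Real.toNNReal (Real.sqrt (m+2))) (sgraph m) (sdom m) := by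
  apply LipschitzOnWith.of_dist_le_mul
  intro x hx y hy
  have hn1 : (0:ℝ) < 1/(m+1) := by positivity
  have hx' : ‖x‖^2 ≤ 1 - 1/(m+1) := hx
  have hy' : ‖y‖^2 ≤ 1 - 1/(m+1) := hy
  set p := Real.sqrt (1 - ‖x‖^2)
  set q := Real.sqrt (1 - ‖y‖^2)
  have hp : Real.sqrt (1/(m+1)) ≤ p := Real.sqrt_le_sqrt (by linarith)
  have hq : Real.sqrt (1/(m+1)) ≤ q := Real.sqrt_le_sqrt (by linarith)
  have hs : (0:ℝ) < Real.sqrt (1/(m+1)) := Real.sqrt_pos.2 hn1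
  have hpq : 0 < p + q := by linarith
  -- |p - q| bound
  have hp2 : p^2 = 1 - ‖x‖^2 := Real.sq_sqrt (by linarith)
  have hq2 : q^2 = 1 - ‖y‖^2 := Real.sq_sqrt (by linarith)
  have hxy : |‖x‖^2 - ‖y‖^2| ≤ 2 * dist x y := by
    have h1 : ‖x‖ ≤ 1 := by nlinarith [norm_nonneg x]
    have h2 : ‖y‖ ≤ 1 := by nlinarith [norm_nonneg y]
    have h3 : |‖x‖ - ‖y‖| ≤ dist x y := abs_norm_sub_norm_le x y |>.trans (by
      rw [dist_eq_norm])
    rw [show ‖x‖^2 - ‖y‖^2 = (‖x‖ + ‖y‖) * (‖x‖ - ‖y‖) by ring, abs_mul]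
    have h4 : |‖x‖ + ‖y‖| ≤ 2 := by rw [abs_of_nonneg (by positivity)]; linarith
    exact mul_le_mul h4 h3 (abs_nonneg _) (by norm_num)
  have hdiff : |p - q| * (p + q) = |‖x‖^2 - ‖y‖^2| := by
    rw [← abs_of_nonneg hpq.le, ← abs_mul]
    rw [show (p - q) * (p + q) = p^2 - q^2 by ring, hp2, hq2,
      show (1 - ‖x‖^2) - (1 - ‖y‖^2) = -(‖x‖^2 - ‖y‖^2) by ring, abs_neg]
  have hinv : (1:ℝ)/(m+1) = Real.sqrt (1/(m+1)) ^2 := (Real.sq_sqrt hn1.le).symm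
  have key : |p - q| ≤ Real.sqrt (m+1) * dist x y := by
    have h5 : |p - q| * (2 * Real.sqrt (1/(m+1))) ≤ |p - q| * (p + q) := by
      apply mul_le_mul_of_nonneg_left (by linarith) (abs_nonneg _)
    have h6 : |p - q| * (2 * Real.sqrt (1/(m+1))) ≤ 2 * dist x y := by
      rw [hdiff] at h5; linarith
    have h7 : Real.sqrt (1/(m+1)) * Real.sqrt (m+1) = 1 := by
      rw [← Real.sqrt_mul hn1.le]
      rw [show (1:ℝ)/(m+1) * (m+1) = 1 by field_simp]
      exact Real.sqrt_one
    have h8 : 0 < Real.sqrt (m+1) := Real.sqrt_pos.2 (by positivity)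
    nlinarith [abs_nonneg (p - q), dist_nonneg (x := x) (y := y)]
  -- assemble
  have hd2 : dist (sgraph m x) (sgraph m y) ^ 2 ≤ (m+2) * dist x y ^ 2 := by
    rw [dist_sq, Fin.sum_univ_succ]
    have e1 : ∑ j : Fin m, (sgraph m x j.succ - sgraph m y j.succ)^2 = dist x y ^2 := by
      rw [dist_sq]
      exact Finset.sum_congr rfl fun j _ => by rw [sgraph_succ, sgraph_succ]
    rw [e1, sgraph_zero, sgraph_zero]
    have : (Real.sqrt (1 - ‖x‖^2) - Real.sqrt (1 - ‖y‖^2))^2 ≤ (m+1) * dist x y ^2 := by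
      have h8 : (0:ℝ) ≤ Real.sqrt (m+1) := Real.sqrt_nonneg _
      have h9 : Real.sqrt (m+1) ^2 = (m+1:ℝ) := Real.sq_sqrt (by positivity)
      have h10 : (p-q)^2 = |p-q|^2 := (sq_abs _).symm
      nlinarith [abs_nonneg (p - q), dist_nonneg (x := x) (y := y), key,
        mul_nonneg h8 (dist_nonneg (x := x) (y := y))]
    linarith
  have hK : (0:ℝ) ≤ Real.sqrt (m+2) := Real.sqrt_nonneg _
  rw [Real.coe_toNNReal _ hK]
  have h9 : Real.sqrt (m+2)^2 = (m+2:ℝ) := Real.sq_sqrt (by positivity)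
  nlinarith [dist_nonneg (x := sgraph m x) (y := sgraph m y), dist_nonneg (x := x) (y := y),
    mul_nonneg hK (dist_nonneg (x := x) (y := y))]


def swapIso (m : ℕ) (i : Fin (m+1)) :
    EuclideanSpace ℝ (Fin (m+1)) ≃ₗᵢ[ℝ] EuclideanSpace ℝ (Fin (m+1)) :=
  LinearIsometryEquiv.piLpCongrLeft 2 ℝ ℝ (Equiv.swap 0 i)

lemma swapIso_apply {m : ℕ} (i : Fin (m+1)) (z : EuclideanSpace ℝ (Fin (m+1))) (j : Fin (m+1)) :
    swapIso m i z j = z (Equiv.swap 0 i j) := by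
  rw [swapIso, LinearIsometryEquiv.piLpCongrLeft_apply]
  simp [Equiv.piCongrLeft'_apply]

lemma norm_swapIso {m : ℕ} (i : Fin (m+1)) (z : EuclideanSpace ℝ (Fin (m+1))) :
    ‖swapIso m i z‖ = ‖z‖ := (swapIso m i).norm_map z

/-- the graph patch -/
def patch (m : ℕ) : Set (EuclideanSpace ℝ (Fin (m+1))) := sgraph m '' sdom m

lemma patch_fin (m : ℕ) : μH[(m:ℝ)] (patch m) < ⊤ := by
  haveI := isAddHaar m
  have h1 : μH[(m:ℝ)] (patch m) ≤
      (Real.toNNReal (Real.sqrt (m+2)) : ℝ≥0∞) ^ (m:ℝ) * μH[(m:ℝ)] (sdom m) :=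
    (lipschitzOn_sgraph m).hausdorffMeasure_image_le (by positivity)
  have h2 : μH[(m:ℝ)] (sdom m) ≤ μH[(m:ℝ)] (closedBall (0 : EuclideanSpace ℝ (Fin m)) 1) := by
    apply measure_mono
    intro x hx
    have hx' : ‖x‖^2 ≤ 1 - 1/(m+1) := hx
    have : (0:ℝ) < 1/(m+1) := by positivity
    rw [mem_closedBall_zero_iff]
    nlinarith [norm_nonneg x]
  have h3 : μH[(m:ℝ)] (closedBall (0 : EuclideanSpace ℝ (Fin m)) 1) < ⊤ :=
    (isCompact_closedBall _ _).measure_lt_top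
  calc μH[(m:ℝ)] (patch m) ≤ _ := h1
    _ < ⊤ := ENNReal.mul_lt_top
        (ENNReal.rpow_lt_top_of_nonneg (by positivity) ENNReal.coe_ne_top) (h2.trans_lt h3)

lemma sphere_cover (m : ℕ) :
    sphere (0 : EuclideanSpace ℝ (Fin (m+1))) 1 ⊆
      ⋃ i : Fin (m+1),
        ((swapIso m i).symm '' patch m ∪ (swapIso m i).symm '' ((-·) '' patch m)) := by
  intro z hz
  have hz1 : ‖z‖ = 1 := mem_sphere_zero_iff_norm.1 hz
  -- find a large coordinate
  have hsum : ∑ j, z j ^ 2 = 1 := by rw [← normsq, hz1]; norm_num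
  have hex : ∃ i, 1/((m:ℝ)+1) ≤ z i ^ 2 := by
    by_contra h
    push_neg at h
    have : ∑ j, z j ^2 < ∑ _j : Fin (m+1), 1/((m:ℝ)+1) :=
      Finset.sum_lt_sum_of_nonempty ⟨0, Finset.mem_univ 0⟩ fun j _ => h j
    rw [hsum, Finset.sum_const, Finset.card_univ, Fintype.card_fin] at this
    simp only [nsmul_eq_mul] at this
    rw [show ((m+1:ℕ):ℝ) * (1/((m:ℝ)+1)) = 1 by push_cast; field_simp] at this
    exact lt_irrefl _ this
  obtain ⟨i, hi⟩ := hex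
  set w := swapIso m i z with hw
  have hwz : (swapIso m i).symm w = z := (swapIso m i).symm_apply_apply z
  have hwn : ‖w‖ = 1 := by rw [hw, norm_swapIso, hz1]
  have hw0 : w 0 = z i := by rw [hw, swapIso_apply, Equiv.swap_apply_left]
  have hw0sq : 1/((m:ℝ)+1) ≤ w 0 ^2 := by rw [hw0]; exact hi
  apply Set.mem_iUnion.2
  refine ⟨i, ?_⟩
  rcases le_or_gt 0 (w 0) with hpos | hneg
  · left
    refine ⟨w, ?_, hwz⟩
    refine ⟨sproj m w, ?_, sgraph_eq w hwn hpos⟩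
    show ‖sproj m w‖^2 ≤ 1 - 1/(m+1)
    rw [normsq_sproj, hwn]
    push_cast
    nlinarith
  · right
    refine ⟨w, ?_, hwz⟩
    refine ⟨-w, ?_, neg_neg w⟩
    refine ⟨sproj m (-w), ?_, sgraph_eq (-w) (by rw [norm_neg, hwn]) ?_⟩
    · show ‖sproj m (-w)‖^2 ≤ 1 - 1/(m+1)
      rw [normsq_sproj, norm_neg, hwn]
      have : (-w) 0 = -(w 0) := rfl
      rw [this]
      push_cast
      nlinarith
    · have : (-w) 0 = -(w 0) := rfl
      rw [this]
      linarith

lemma sphere_fin (m : ℕ) : μH[(m:ℝ)] (sphere (0 : EuclideanSpace ℝ (Fin (m+1))) 1) < ⊤ := by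
  refine (measure_mono (sphere_cover m)).trans_lt ?_
  refine (measure_iUnion_le _).trans_lt ?_
  have key : ∀ i : Fin (m+1),
      μH[(m:ℝ)] ((swapIso m i).symm '' patch m ∪ (swapIso m i).symm '' ((-·) '' patch m))
        ≤ 2 * μH[(m:ℝ)] (patch m) := by
    intro i
    refine (measure_union_le _ _).trans ?_
    have e1 : μH[(m:ℝ)] ((swapIso m i).symm '' patch m) = μH[(m:ℝ)] (patch m) :=
      (swapIso m i).symm.toIsometryEquiv.hausdorffMeasure_image _ _
    set negIso : EuclideanSpace ℝ (Fin (m+1)) ≃ₗᵢ[ℝ] EuclideanSpace ℝ (Fin (m+1)) :=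
      LinearIsometryEquiv.neg ℝ with hneg
    have e3 : ((-·) '' patch m) = ⇑negIso '' patch m := by
      apply Set.image_congr'
      intro x
      simp [hneg, LinearIsometryEquiv.neg, LinearEquiv.neg]
    have e2 : μH[(m:ℝ)] ((swapIso m i).symm '' ((-·) '' patch m)) = μH[(m:ℝ)] (patch m) := by
      rw [show μH[(m:ℝ)] ((swapIso m i).symm '' ((-·) '' patch m))
            = μH[(m:ℝ)] ((-·) '' patch m) from
          (swapIso m i).symm.toIsometryEquiv.hausdorffMeasure_image _ _, e3,
        show ⇑negIso '' patch m = ⇑negIso.toIsometryEquiv '' patch m from rfl,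
        negIso.toIsometryEquiv.hausdorffMeasure_image]
    rw [e1, e2, two_mul]
  refine (ENNReal.tsum_le_tsum (fun i => key i)).trans_lt ?_
  rw [tsum_fintype, Finset.sum_const, Finset.card_univ, Fintype.card_fin]
  simp only [nsmul_eq_mul]
  exact ENNReal.mul_lt_top (by simp [lt_top_iff_ne_top])
    (ENNReal.mul_lt_top (by norm_num) (patch_fin m))


lemma pos_section (m : ℕ) (hm : 1 ≤ m) (c : ℝ) :
    0 < μH[(m:ℝ)] {z ∈ sphere (0 : EuclideanSpace ℝ (Fin (m+1))) 1 | z 0 ^ 2 ≠ c} := by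
  haveI := isAddHaar m
  haveI : Nonempty (Fin m) := ⟨⟨0, hm⟩⟩
  set W : Set (EuclideanSpace ℝ (Fin m)) :=
    ball 0 1 \ {x | ‖x‖^2 = 1 - c} with hW
  have hnull : μH[(m:ℝ)] {x : EuclideanSpace ℝ (Fin m) | ‖x‖^2 = 1 - c} = 0 := by
    refine measure_mono_null (fun x hx => ?_)
      (Measure.addHaar_sphere μH[(m:ℝ)] 0 (Real.sqrt (1 - c)))
    have hx' : ‖x‖^2 = 1 - c := hx
    rw [mem_sphere_zero_iff_norm, ← hx', Real.sqrt_sq (norm_nonneg x)]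
  have hWpos : 0 < μH[(m:ℝ)] W := by
    rw [hW, measure_diff_null hnull]
    exact measure_ball_pos _ _ one_pos
  have hsub : W ⊆ sproj m '' {z ∈ sphere (0 : EuclideanSpace ℝ (Fin (m+1))) 1 | z 0 ^ 2 ≠ c} := by
    rintro x ⟨hx1, hx2⟩
    have hx1' : ‖x‖ < 1 := mem_ball_zero_iff.1 hx1
    have hx2' : ‖x‖^2 ≠ 1 - c := hx2
    have hxle : ‖x‖^2 ≤ 1 := by nlinarith [norm_nonneg x]
    refine ⟨sgraph m x, ⟨?_, ?_⟩, sproj_sgraph x⟩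
    · rw [mem_sphere_zero_iff_norm]
      have := normsq_sgraph x hxle
      nlinarith [norm_nonneg (sgraph m x)]
    · rw [sgraph_zero, Real.sq_sqrt (by linarith)]
      intro h
      exact hx2' (by linarith [h])
  calc 0 < μH[(m:ℝ)] W := hWpos
    _ ≤ μH[(m:ℝ)] (sproj m '' {z ∈ sphere (0 : EuclideanSpace ℝ (Fin (m+1))) 1 | z 0 ^ 2 ≠ c}) :=
        measure_mono hsub
    _ ≤ ((1 : NNReal) : ℝ≥0∞) ^ (m:ℝ) * μH[(m:ℝ)] {z ∈ sphere (0 : EuclideanSpace ℝ (Fin (m+1))) 1 | z 0 ^ 2 ≠ c} :=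
        (lipschitz_sproj m).hausdorffMeasure_image_le (by positivity) _
    _ = μH[(m:ℝ)] {z ∈ sphere (0 : EuclideanSpace ℝ (Fin (m+1))) 1 | z 0 ^ 2 ≠ c} := by
        rw [ENNReal.coe_one, ENNReal.one_rpow, one_mul]

lemma finite_restrict (m : ℕ) :
    IsFiniteMeasure ((μH[(m:ℝ)] : Measure (EuclideanSpace ℝ (Fin (m+1)))).restrict
      (sphere 0 1)) := by
  constructor
  rw [Measure.restrict_apply_univ]
  exact sphere_fin m

lemma integrableOn_sphere {m : ℕ} (φ : EuclideanSpace ℝ (Fin (m+1)) → ℝ)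
    (hφ : ContinuousOn φ (sphere 0 1)) :
    IntegrableOn φ (sphere (0 : EuclideanSpace ℝ (Fin (m+1))) 1) μH[(m:ℝ)] := by
  haveI := finite_restrict m
  obtain ⟨C, hC⟩ := (isCompact_sphere (0 : EuclideanSpace ℝ (Fin (m+1))) 1).exists_bound_of_continuousOn hφ
  refine Integrable.mono' (integrable_const C)
    (hφ.aestronglyMeasurable isClosed_sphere.measurableSet) ?_
  filter_upwards [ae_restrict_mem isClosed_sphere.measurableSet] with z hz
  exact hC z hz

lemma continuous_coord {m : ℕ} (i : Fin (m+1)) :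
    Continuous (fun z : EuclideanSpace ℝ (Fin (m+1)) => z i) := by
  exact (EuclideanSpace.proj i).continuous

lemma setIntegral_swap (m : ℕ) (i : Fin (m+1)) :
    ∫ z in sphere (0 : EuclideanSpace ℝ (Fin (m+1))) 1, (z i)^2 ∂μH[(m:ℝ)]
      = ∫ z in sphere (0 : EuclideanSpace ℝ (Fin (m+1))) 1, (z 0)^2 ∂μH[(m:ℝ)] := by
  set e := (swapIso m i).toIsometryEquiv with he
  have mp := e.measurePreserving_hausdorffMeasure (m:ℝ)
  have me : MeasurableEmbedding ⇑e := e.toHomeomorph.measurableEmbedding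
  have key := mp.setIntegral_preimage_emb me (fun z => (z i)^2) (sphere 0 1)
  have hpre : ⇑e ⁻¹' (sphere 0 1) = sphere (0 : EuclideanSpace ℝ (Fin (m+1))) 1 := by
    ext z
    simp only [Set.mem_preimage, mem_sphere_zero_iff_norm]
    rw [show ⇑e = ⇑(swapIso m i) from rfl, norm_swapIso]
  rw [hpre] at key
  rw [← key]
  apply setIntegral_congr_fun isClosed_sphere.measurableSet
  intro z _
  show (e z) i ^ 2 = z 0 ^ 2
  rw [show ⇑e = ⇑(swapIso m i) from rfl, swapIso_apply, Equiv.swap_apply_right]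

lemma integral_coord_sq (m : ℕ) :
    ((m:ℝ)+1) * ∫ z in sphere (0 : EuclideanSpace ℝ (Fin (m+1))) 1, (z 0)^2 ∂μH[(m:ℝ)]
      = (μH[(m:ℝ)] (sphere (0 : EuclideanSpace ℝ (Fin (m+1))) 1)).toReal := by
  have hInt : ∀ i : Fin (m+1), IntegrableOn
      (fun z : EuclideanSpace ℝ (Fin (m+1)) => (z i)^2) (sphere 0 1) μH[(m:ℝ)] :=
    fun i => integrableOn_sphere _ (((continuous_coord i).pow 2).continuousOn)
  have h1 : ∫ z in sphere (0 : EuclideanSpace ℝ (Fin (m+1))) 1, (∑ i, (z i)^2) ∂μH[(m:ℝ)]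
      = ∑ i : Fin (m+1), ∫ z in sphere (0 : EuclideanSpace ℝ (Fin (m+1))) 1, (z i)^2 ∂μH[(m:ℝ)] :=
    integral_finset_sum _ (fun i _ => hInt i)
  have h2 : ∫ z in sphere (0 : EuclideanSpace ℝ (Fin (m+1))) 1, (∑ i, (z i)^2) ∂μH[(m:ℝ)]
      = (μH[(m:ℝ)] (sphere (0 : EuclideanSpace ℝ (Fin (m+1))) 1)).toReal := by
    rw [setIntegral_congr_fun isClosed_sphere.measurableSet
      (g := fun _ => (1:ℝ)) (fun z hz => by
        rw [← normsq, mem_sphere_zero_iff_norm.1 hz, one_pow])]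
    rw [setIntegral_const, smul_eq_mul, mul_one, measureReal_def]
  have h3 : ∑ i : Fin (m+1), ∫ z in sphere (0 : EuclideanSpace ℝ (Fin (m+1))) 1, (z i)^2 ∂μH[(m:ℝ)]
      = ((m:ℝ)+1) * ∫ z in sphere (0 : EuclideanSpace ℝ (Fin (m+1))) 1, (z 0)^2 ∂μH[(m:ℝ)] := by
    rw [Finset.sum_congr rfl (fun i _ => setIntegral_swap m i), Finset.sum_const,
      Finset.card_univ, Fintype.card_fin, nsmul_eq_mul]
    push_cast
    ring
  rw [← h3, ← h1, h2]


end S7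

open S7 in
set_option maxHeartbeats 1000000 in
theorem statement7' (n : ℕ) (hn : 2 ≤ n) (I : Set ℝ) (hI0 : I ⊆ Set.Ici 0)
    (hIconn : I.OrdConnected) (hIint : (interior I).Nonempty)
    (g : ℝ → ℝ) (hg : StrictConvexOn ℝ I g) :
    ∃ A : Matrix (Fin n) (Fin n) ℝ,
      g (Real.sqrt (∑ i, ∑ j, A i j ^ 2) ^ 2) < ⨍ z in sphere (0 : EuclideanSpace ℝ (Fin n)) 1,
        g (n * ‖Matrix.toEuclideanLin A z‖ ^ 2) ∂μH[(n : ℝ) - 1] := by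
  obtain ⟨m, rfl⟩ : ∃ m, n = m + 1 := ⟨n - 1, by omega⟩
  have hm : 1 ≤ m := by omega
  rw [show ((m+1:ℕ):ℝ) - 1 = (m:ℝ) by push_cast; ring]
  -- interval setup
  obtain ⟨x₀, hx₀⟩ := hIint
  obtain ⟨ε, hε, hball⟩ := Metric.isOpen_iff.1 isOpen_interior x₀ hx₀
  set a : ℝ := x₀ - ε/2 with ha
  set b : ℝ := x₀ + ε/2 with hb
  have hab : a < b := by rw [ha, hb]; linarith
  have hIcc : Set.Icc a b ⊆ interior I := by
    intro y hy
    apply hball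
    rw [mem_ball, Real.dist_eq, abs_lt]
    obtain ⟨h1, h2⟩ := hy
    rw [ha] at h1; rw [hb] at h2
    constructor <;> linarith
  have hIccI : Set.Icc a b ⊆ I := hIcc.trans interior_subset
  have ha0 : 0 ≤ a := hI0 (hIccI ⟨le_rfl, hab.le⟩)
  have hb0 : 0 ≤ b := le_trans ha0 hab.le
  have hg1 : StrictConvexOn ℝ (Set.Icc a b) g := hg.subset hIccI (convex_Icc a b)
  have hg2 : ContinuousOn g (Set.Icc a b) := (hg.convexOn.continuousOn_interior).mono hIcc
  -- the matrix
  set N : ℝ := (m:ℝ) + 1 with hN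
  have hNpos : 0 < N := by rw [hN]; positivity
  set dv : Fin (m+1) → ℝ := fun i => if i = 0 then Real.sqrt (a / N) else Real.sqrt (b / N)
    with hdv
  set A : Matrix (Fin (m+1)) (Fin (m+1)) ℝ := Matrix.diagonal dv with hA
  refine ⟨A, ?_⟩
  have hdvsq : ∀ i, dv i ^ 2 = if i = 0 then a / N else b / N := by
    intro i
    rw [hdv]
    by_cases h : i = 0 <;> simp [h, Real.sq_sqrt, div_nonneg ha0 hNpos.le,
      div_nonneg hb0 hNpos.le]
  -- frobenius norm
  have hfrob : Real.sqrt (∑ i, ∑ j, A i j ^ 2) ^ 2 = (a + m * b) / N := by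
    rw [Real.sq_sqrt (by positivity)]
    have h1 : ∀ i, ∑ j, A i j ^ 2 = dv i ^ 2 := by
      intro i
      rw [Finset.sum_eq_single i (fun j _ hj => by
        rw [hA, Matrix.diagonal_apply_ne' _ hj]; ring) (fun h => absurd (Finset.mem_univ i) h)]
      rw [hA, Matrix.diagonal_apply_eq]
    rw [Finset.sum_congr rfl fun i _ => h1 i, Finset.sum_congr rfl fun i _ => hdvsq i,
      Fin.sum_univ_succ]
    simp only [if_pos rfl, ↓reduceIte]
    rw [Finset.sum_congr rfl (fun i (_ : i ∈ Finset.univ) =>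
      if_neg (Fin.succ_ne_zero (i : Fin m))), Finset.sum_const, Finset.card_univ,
      Fintype.card_fin, nsmul_eq_mul]
    field_simp
  -- pointwise formula on the sphere
  have hAz : ∀ (z : EuclideanSpace ℝ (Fin (m+1))) i, Matrix.toEuclideanLin A z i = dv i * z i := by
    intro z i
    have : Matrix.toEuclideanLin A z i = ∑ j, A i j * z j := by
      simp [Matrix.toEuclideanLin, Matrix.mulVec, dotProduct]
    rw [this, Finset.sum_eq_single i (fun j _ hj => by
      rw [hA, Matrix.diagonal_apply_ne' _ hj]; ring) (fun h => absurd (Finset.mem_univ i) h),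
      hA, Matrix.diagonal_apply_eq]
  have hfz : ∀ z ∈ sphere (0 : EuclideanSpace ℝ (Fin (m+1))) 1,
      ((m+1:ℕ):ℝ) * ‖Matrix.toEuclideanLin A z‖ ^ 2 = b - (b-a) * (z 0)^2 := by
    intro z hz
    have hz1 : ‖z‖ = 1 := mem_sphere_zero_iff_norm.1 hz
    have h2 : ‖Matrix.toEuclideanLin A z‖^2 = ∑ i, (dv i * z i)^2 := by
      rw [normsq]
      exact Finset.sum_congr rfl fun i _ => by rw [hAz]
    have h3 : ∑ i, (dv i * z i)^2 = (a/N) * (z 0)^2 + (b/N) * ∑ i : Fin m, (z i.succ)^2 := by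
      rw [Finset.sum_congr rfl (fun i (_ : i ∈ Finset.univ) =>
        show (dv i * z i)^2 = (if i = 0 then a/N else b/N) * (z i)^2 by
          rw [mul_pow, hdvsq]), Fin.sum_univ_succ, if_pos rfl]
      rw [Finset.sum_congr rfl (fun i (_ : i ∈ Finset.univ) =>
        by rw [if_neg (Fin.succ_ne_zero (i : Fin m))]), Finset.mul_sum]
    have h4 : ∑ i : Fin m, (z i.succ)^2 = 1 - (z 0)^2 := by
      have := normsq_succ z
      rw [hz1] at this
      nlinarith [this]
    rw [h2, h3, h4]
    push_cast
    rw [← hN]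
    field_simp
    ring
  -- measure facts
  haveI := finite_restrict m
  set S : Set (EuclideanSpace ℝ (Fin (m+1))) := sphere 0 1 with hS
  set μ : Measure (EuclideanSpace ℝ (Fin (m+1))) := μH[(m:ℝ)] with hμ
  have hSpos : 0 < μ S := lt_of_lt_of_le (pos_section m hm 2) (measure_mono fun z hz => hz.1)
  have htpos : 0 < (μ S).toReal := ENNReal.toReal_pos hSpos.ne' (sphere_fin m).ne
  set t : ℝ := (μ S).toReal with ht
  -- the simplified integrand
  set f : EuclideanSpace ℝ (Fin (m+1)) → ℝ := fun z => b - (b-a) * (z 0)^2 with hf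
  have hcf : Continuous f := by
    rw [hf]; exact continuous_const.sub (continuous_const.mul ((continuous_coord 0).pow 2))
  have hz0sq : ∀ z ∈ S, (z 0)^2 ≤ 1 := by
    intro z hz
    have hz1 : ‖z‖ = 1 := mem_sphere_zero_iff_norm.1 hz
    have := normsq_succ z
    rw [hz1] at this
    have h5 : (0:ℝ) ≤ ∑ i : Fin m, (z i.succ)^2 := by positivity
    nlinarith
  have hmemIcc : ∀ z ∈ S, f z ∈ Set.Icc a b := by
    intro z hz
    have h1 := hz0sq z hz
    have h2 : (0:ℝ) ≤ (z 0)^2 := sq_nonneg _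
    constructor
    · rw [hf]; simp only; nlinarith
    · rw [hf]; simp only; nlinarith
  have hfi : Integrable f (μ.restrict S) := integrableOn_sphere f hcf.continuousOn
  have hgi : Integrable (g ∘ f) (μ.restrict S) := by
    apply integrableOn_sphere
    exact ContinuousOn.comp hg2 hcf.continuousOn hmemIcc
  have hmem : ∀ᵐ z ∂(μ.restrict S), f z ∈ Set.Icc a b := by
    filter_upwards [ae_restrict_mem isClosed_sphere.measurableSet] with z hz
    exact hmemIcc z hz
  -- average of f
  have hintf : ∫ z in S, f z ∂μ = b * t - (b-a) * (t / N) := by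
    have hs0 : N * ∫ z in S, (z 0)^2 ∂μ = t := integral_coord_sq m
    have hint0 : IntegrableOn (fun z : EuclideanSpace ℝ (Fin (m+1)) => (z 0)^2) S μ :=
      integrableOn_sphere _ (((continuous_coord 0).pow 2).continuousOn)
    rw [hf]
    rw [integral_sub (integrableOn_const (C := b) (sphere_fin m).ne) (hint0.const_mul _)]
    rw [setIntegral_const, integral_const_mul, smul_eq_mul, measureReal_def]
    have : ∫ z in S, (z 0)^2 ∂μ = t / N := by
      field_simp at hs0 ⊢
      linarith [hs0]
    rw [this, ← hS, ← hμ, ← ht]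
    ring
  have havgf : ⨍ z in S, f z ∂μ = (a + m * b) / N := by
    rw [setAverage_eq, hintf, smul_eq_mul]
    rw [measureReal_def, ← ht]
    field_simp
    ring
  -- Jensen
  rcases hg1.ae_eq_const_or_map_average_lt hg2 isClosed_Icc hmem hfi hgi with hconst | hlt
  · -- contradiction with pos_section
    exfalso
    obtain ⟨M, hconst⟩ : ∃ M : ℝ, f =ᵐ[μ.restrict S] Function.const _ M := ⟨_, hconst⟩
    set c : ℝ := (b - M) / (b - a) with hc
    have hsub : {z : EuclideanSpace ℝ (Fin (m+1)) | (z 0)^2 ≠ c} ∩ S ⊆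
        {z | f z ≠ M} ∩ S := by
      rintro z ⟨hz1, hz2⟩
      refine ⟨?_, hz2⟩
      intro hfz'
      apply hz1
      rw [hc, ← hfz', hf]
      simp only
      rw [show b - (b - (b - a) * z 0 ^ 2) = (b - a) * z 0 ^ 2 by ring,
        mul_div_cancel_left₀ _ (ne_of_gt (sub_pos.2 hab))]
    have h0 : (μ.restrict S) {z | f z ≠ M} = 0 := by
      have h0' := ae_iff.1 hconst
      simpa using h0'
    rw [Measure.restrict_apply (by
      exact (isClosed_eq hcf continuous_const).isOpen_compl.measurableSet)] at h0
    have hpos := pos_section m hm c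
    have : μ ({z : EuclideanSpace ℝ (Fin (m+1)) | (z 0)^2 ≠ c} ∩ S) = 0 :=
      measure_mono_null hsub h0
    have heq : {z ∈ sphere (0 : EuclideanSpace ℝ (Fin (m+1))) 1 | z 0 ^ 2 ≠ c}
        = {z : EuclideanSpace ℝ (Fin (m+1)) | (z 0)^2 ≠ c} ∩ S := by
      ext z; exact ⟨fun h => ⟨h.2, h.1⟩, fun h => ⟨h.2, h.1⟩⟩
    rw [heq, this] at hpos
    exact lt_irrefl _ hpos
  · -- conclude
    have hgoal1 : (⨍ z in S, g (((m+1:ℕ):ℝ) * ‖Matrix.toEuclideanLin A z‖ ^ 2) ∂μ)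
        = ⨍ z in S, g (f z) ∂μ := by
      rw [setAverage_eq, setAverage_eq]
      congr 1
      apply setIntegral_congr_fun isClosed_sphere.measurableSet
      intro z hz
      show g (((m+1:ℕ):ℝ) * ‖Matrix.toEuclideanLin A z‖ ^ 2) = g (f z)
      rw [hfz z hz]
    have havg : ⨍ z, f z ∂(μ.restrict S) = (a + m * b) / N := havgf
    rw [havg] at hlt
    rw [hfrob]
    calc g ((a + m * b) / N) < ⨍ z, g (f z) ∂(μ.restrict S) := hlt
      _ = ⨍ z in S, g (((m+1:ℕ):ℝ) * ‖Matrix.toEuclideanLin A z‖ ^ 2) ∂μ := hgoal1.symm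



/-- if `g` is strictly convex on a subinterval `I ⊆ [0,∞)` with nonempty
interior, then `w̄(A) = g(|A|²)` fails the mean-value formula: there is `A` with
`g(|A|²) < ⨍_{S^{n-1}} g(n |Az|²) dH^{n-1}(z)` (note `| |Az| Iₙ |² = n |Az|²`). -/
theorem statement7 (n : ℕ) (hn : 2 ≤ n) (I : Set ℝ) (hI0 : I ⊆ Set.Ici 0)
    (hIconn : I.OrdConnected) (hIint : (interior I).Nonempty)
    (g : ℝ → ℝ) (hg : StrictConvexOn ℝ I g) :
    ∃ A : Matrix (Fin n) (Fin n) ℝ,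
      g (frob A ^ 2) < ⨍ z in unitSphere n,
        g (n * ‖Matrix.toEuclideanLin A z‖ ^ 2) ∂μH[(n : ℝ) - 1] := by
  exact statement7' n hn I hI0 hIconn hIint g hg
end
end

section
/- Let g : ℝ → ℝ satisfy g(t) ≥ g(t²/√3) for all t ≥ √3. Then sup_{t ∈ [2√3, ∞)} g(t) = sup_{t ∈ [2√3, 4√3]} g(t). In particular, if g is bounded above on [2√3, 4√3], then g is bounded above on [2√3, ∞), so limsup_{t→∞} g(t) < ∞. -/
open MeasureTheory Metric
open scoped ENNReal

noncomputable section

/-- the iteration argument: if `g(t) ≥ g(t²/√3)` for all `t ≥ √3`, then the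
supremum of `g` on `[2√3, ∞)` equals that on `[2√3, 4√3]`; in particular, if `g` is bounded
above on `[2√3, 4√3]` then it is bounded above on `[2√3, ∞)`, so `limsup_{t→∞} g(t) < ∞`. -/
theorem statement9 (g : ℝ → ℝ)
    (h : ∀ t : ℝ, Real.sqrt 3 ≤ t → g (t ^ 2 / Real.sqrt 3) ≤ g t) :
    sSup (g '' Set.Ici (2 * Real.sqrt 3))
        = sSup (g '' Set.Icc (2 * Real.sqrt 3) (4 * Real.sqrt 3))
      ∧ (BddAbove (g '' Set.Icc (2 * Real.sqrt 3) (4 * Real.sqrt 3)) →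
          BddAbove (g '' Set.Ici (2 * Real.sqrt 3)) ∧
          Filter.limsup (fun t : ℝ => (g t : EReal)) Filter.atTop < ⊤) := by
  have ha : (0:ℝ) < Real.sqrt 3 := Real.sqrt_pos.2 (by norm_num)
  set a := Real.sqrt 3 with ha_def
  have ha3 : a * a = 3 := Real.mul_self_sqrt (by norm_num)
  have key : ∀ r : ℝ, 1 ≤ r → g (a * r ^ 2) ≤ g (a * r) := by
    intro r hr
    have ht : a ≤ a * r := by nlinarith
    have := h (a * r) ht
    have heq : (a * r) ^ 2 / a = a * r ^ 2 := by
      rw [div_eq_iff ha.ne']; nlinarith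
    rwa [heq] at this
  have main : ∀ k : ℕ, ∀ u : ℝ, 2 ≤ u → u ≤ 4 ^ (2 ^ k) →
      ∃ v, 2 ≤ v ∧ v ≤ 4 ∧ g (a * u) ≤ g (a * v) := by
    intro k
    induction k with
    | zero => intro u h2 h4; exact ⟨u, h2, by norm_num at h4 ⊢; exact h4, le_refl _⟩
    | succ k ih =>
      intro u h2 h4
      by_cases hu4 : u ≤ 4
      · exact ⟨u, h2, hu4, le_refl _⟩
      · push_neg at hu4
        set r := Real.sqrt u with hr_def
        have hr0 : 0 ≤ r := Real.sqrt_nonneg u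
        have hr2 : r ^ 2 = u := Real.sq_sqrt (by linarith)
        have hr_ge : 2 ≤ r := by nlinarith
        have hpow : (0:ℝ) < 4 ^ (2 ^ k) := by positivity
        have h4' : u ≤ (4 ^ (2 ^ k) : ℝ) ^ 2 := by
          have : (4:ℝ) ^ (2 ^ (k + 1)) = (4 ^ (2 ^ k)) ^ 2 := by
            rw [← pow_mul, pow_succ]
          linarith [h4, this.symm.le, this.le]
        have hr_le : r ≤ 4 ^ (2 ^ k) := by nlinarith
        obtain ⟨v, hv2, hv4, hgv⟩ := ih r hr_ge hr_le
        have : g (a * u) ≤ g (a * r) := by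
          have := key r (by linarith)
          rwa [hr2] at this
        exact ⟨v, hv2, hv4, le_trans this hgv⟩
  have claim : ∀ s : ℝ, 2 * a ≤ s → ∃ t, 2 * a ≤ t ∧ t ≤ 4 * a ∧ g s ≤ g t := by
    intro s hs
    set u := s / a with hu_def
    have hu2 : 2 ≤ u := (le_div_iff₀ ha).2 (by linarith)
    obtain ⟨n, hn⟩ := exists_nat_ge u
    have hnat : (n : ℝ) ≤ 4 ^ (2 ^ n) := by
      have h1 : n ≤ 4 ^ (2 ^ n) := by
        calc n ≤ 2 ^ n := Nat.le_of_lt (Nat.lt_two_pow_self (n := n))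
        _ ≤ 4 ^ n := Nat.pow_le_pow_left (by norm_num) n
        _ ≤ 4 ^ (2 ^ n) := Nat.pow_le_pow_right (by norm_num)
              (Nat.le_of_lt (Nat.lt_two_pow_self (n := n)))
      exact_mod_cast h1
    obtain ⟨v, hv2, hv4, hgv⟩ := main n u hu2 (le_trans hn hnat)
    have hsu : s = a * u := by rw [hu_def, mul_comm, div_mul_cancel₀ s ha.ne']
    refine ⟨a * v, by nlinarith, by nlinarith, ?_⟩
    rw [hsu]; exact hgv
  have claim' : ∀ x ∈ g '' Set.Ici (2 * a),
      ∃ y ∈ g '' Set.Icc (2 * a) (4 * a), x ≤ y := by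
    rintro x ⟨s, hs, rfl⟩
    obtain ⟨t, ht1, ht2, hgt⟩ := claim s hs
    exact ⟨g t, ⟨t, ⟨ht1, ht2⟩, rfl⟩, hgt⟩
  have hsub : g '' Set.Icc (2 * a) (4 * a) ⊆ g '' Set.Ici (2 * a) :=
    Set.image_mono (fun x hx => hx.1)
  have hneT : (g '' Set.Icc (2 * a) (4 * a)).Nonempty :=
    ⟨g (2 * a), ⟨2 * a, ⟨le_refl _, by nlinarith⟩, rfl⟩⟩
  have hneS : (g '' Set.Ici (2 * a)).Nonempty := ⟨g (2 * a), ⟨2 * a, Set.self_mem_Ici, rfl⟩⟩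
  have hbdd : BddAbove (g '' Set.Icc (2 * a) (4 * a)) →
      BddAbove (g '' Set.Ici (2 * a)) := by
    rintro ⟨M, hM⟩
    refine ⟨M, fun x hx => ?_⟩
    obtain ⟨y, hy, hxy⟩ := claim' x hx
    exact le_trans hxy (hM hy)
  constructor
  · by_cases hb : BddAbove (g '' Set.Icc (2 * a) (4 * a))
    · refine le_antisymm (csSup_le hneS fun x hx => ?_) (csSup_le_csSup (hbdd hb) hneT hsub)
      obtain ⟨y, hy, hxy⟩ := claim' x hx
      exact le_trans hxy (le_csSup hb hy)
    · have hbS : ¬BddAbove (g '' Set.Ici (2 * a)) := fun hS => hb (hS.mono hsub)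
      rw [Real.sSup_of_not_bddAbove hbS, Real.sSup_of_not_bddAbove hb]
  · intro hb
    have hS := hbdd hb
    refine ⟨hS, ?_⟩
    obtain ⟨M, hM⟩ := hS
    have hev : ∀ᶠ t in Filter.atTop, (g t : EReal) ≤ (M : EReal) := by
      filter_upwards [Filter.eventually_ge_atTop (2 * a)] with t ht
      exact_mod_cast hM ⟨t, ht, rfl⟩
    calc Filter.limsup (fun t : ℝ => (g t : EReal)) Filter.atTop ≤ (M : EReal) :=
          Filter.limsup_le_of_le (by isBoundedDefault) hev
    _ < ⊤ := EReal.coe_lt_top M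
end
end

section
/- Let n ≥ 1, let A ∈ ℝ^{n×n}, and let v : ℝⁿ → ℝⁿ be a smooth (C^∞) map with compact support contained in the open unit cube (0,1)^n. Then ∫_{(0,1)^n} det(A + Dv(x)) dx = det A, where Dv(x) is the Jacobian matrix of v at x. -/
set_option maxHeartbeats 1000000


open MeasureTheory Metric
open scoped ENNReal

noncomputable section

-- det as continuous multilinear map
noncomputable def detCMM (n : ℕ) : ContinuousMultilinearMap ℝ (fun _ : Fin n => (Fin n → ℝ)) ℝ :=
  MultilinearMap.mkContinuous (Matrix.detRowAlternating (R := ℝ) (n := Fin n)).toMultilinearMap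
    (Fintype.card (Equiv.Perm (Fin n))) (by
      intro m
      show ‖Matrix.det (Matrix.of m)‖ ≤ _
      rw [Matrix.det_apply]
      calc ‖∑ σ : Equiv.Perm (Fin n), Equiv.Perm.sign σ • ∏ i, (Matrix.of m) (σ i) i‖
          ≤ ∑ σ : Equiv.Perm (Fin n), ‖Equiv.Perm.sign σ • ∏ i, (Matrix.of m) (σ i) i‖ :=
            norm_sum_le _ _
        _ ≤ ∑ σ : Equiv.Perm (Fin n), ∏ i, ‖m i‖ := by
            apply Finset.sum_le_sum
            intro σ _
            have key : ‖∏ i, (Matrix.of m) (σ i) i‖ ≤ ∏ i, ‖m i‖ := by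
              calc ‖∏ i, (Matrix.of m) (σ i) i‖
                  = ∏ i, ‖(Matrix.of m) (σ i) i‖ := by
                    simp only [Real.norm_eq_abs]; exact Finset.abs_prod _ _
                _ ≤ ∏ i, ‖m (σ i)‖ := by
                    apply Finset.prod_le_prod (fun _ _ => norm_nonneg _)
                    intro i _
                    exact norm_le_pi_norm (m (σ i)) i
                _ = ∏ i, ‖m i‖ := Equiv.prod_comp σ (fun i => ‖m i‖)
            rcases Int.units_eq_one_or (Equiv.Perm.sign σ) with h | h <;>
              simp only [h, one_smul, Units.neg_smul, norm_neg] <;> exact key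
        _ = (Fintype.card (Equiv.Perm (Fin n)) : ℝ) * ∏ i, ‖m i‖ := by
            rw [Finset.sum_const, Finset.card_univ, nsmul_eq_mul]
      )

lemma detCMM_apply (n : ℕ) (m : Fin n → (Fin n → ℝ)) :
    detCMM n m = Matrix.det (Matrix.of m) := rfl

lemma hasFDerivAt_det_rows {E : Type*} [NormedAddCommGroup E] [NormedSpace ℝ E] {n : ℕ}
    (m : Fin n → E → (Fin n → ℝ)) (m' : Fin n → (E →L[ℝ] (Fin n → ℝ))) (x : E)
    (h : ∀ i, HasFDerivAt (m i) (m' i) x) :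
    HasFDerivAt (fun y => Matrix.det (Matrix.of fun i => m i y))
      (((detCMM n).linearDeriv (fun i => m i x)).comp (ContinuousLinearMap.pi m')) x := by
  have h1 := (detCMM n).hasFDerivAt (x := fun i => m i x)
  have h2 : HasFDerivAt (fun y (i : Fin n) => m i y) (ContinuousLinearMap.pi m') x :=
    hasFDerivAt_pi.2 h
  exact h1.comp x h2

lemma det_deriv_apply {E : Type*} [NormedAddCommGroup E] [NormedSpace ℝ E] {n : ℕ}
    (r : Fin n → (Fin n → ℝ)) (m' : Fin n → (E →L[ℝ] (Fin n → ℝ))) (h : E) :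
    (((detCMM n).linearDeriv r).comp (ContinuousLinearMap.pi m')) h
      = ∑ i, Matrix.det (Matrix.of (Function.update r i (m' i h))) := by
  rw [ContinuousLinearMap.comp_apply, ContinuousMultilinearMap.linearDeriv_apply]
  exact Finset.sum_congr rfl fun i _ => rfl

lemma key_vanish (n : ℕ) (hn : n ≠ 0) (V : (Fin n → ℝ) → (Fin n → ℝ))
    (hsm : ContDiff ℝ (⊤ : ℕ∞) V)
    (hsupp : tsupport V ⊆ Set.pi Set.univ fun _ => Set.Ioo (0:ℝ) 1)
    (A : Matrix (Fin n) (Fin n) ℝ) (s : Finset (Fin n)) (i₀ : Fin n) (hi₀ : i₀ ∈ s) :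
    ∫ x in Set.Icc (0 : Fin n → ℝ) 1,
      Matrix.det (Matrix.of fun i =>
        if i ∈ s then (fun j => fderiv ℝ V x (Pi.single j 1) i) else A i) = 0 := by
  -- first and second derivatives
  set W : (Fin n → ℝ) → ((Fin n → ℝ) →L[ℝ] (Fin n → ℝ)) := fderiv ℝ V with hW
  have hWsm : ContDiff ℝ (⊤ : ℕ∞) W := hsm.fderiv_right (by simp)
  have hVd : ∀ y, HasFDerivAt V (W y) y := fun y =>
    (hsm.differentiable (by simp) y).hasFDerivAt
  have hWd : ∀ y, HasFDerivAt W (fderiv ℝ W y) y := fun y =>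
    (hWsm.differentiable (by simp) y).hasFDerivAt
  -- row functions
  set gradRow : Fin n → (Fin n → ℝ) → (Fin n → ℝ) :=
    fun i x j => W x (Pi.single j 1) i with hgradRow
  set Ri : Fin n → (Fin n → ℝ) → ((Fin n → ℝ) →L[ℝ] (Fin n → ℝ)) := fun i x =>
    ContinuousLinearMap.pi fun k =>
      ((ContinuousLinearMap.proj i).comp
        (ContinuousLinearMap.apply ℝ (Fin n → ℝ) (Pi.single k 1))).comp (fderiv ℝ W x) with hRidef
  have hRi : ∀ i x, HasFDerivAt (gradRow i) (Ri i x) x := by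
    intro i x
    refine hasFDerivAt_pi.2 fun k => ?_
    exact (((ContinuousLinearMap.proj i).comp
      (ContinuousLinearMap.apply ℝ (Fin n → ℝ) (Pi.single k 1))).hasFDerivAt).comp x (hWd x)
  have hgradcont : ∀ i, Continuous (gradRow i) := fun i =>
    continuous_pi fun k => ((continuous_apply i).comp
      ((ContinuousLinearMap.apply ℝ (Fin n → ℝ) (Pi.single k 1)).continuous)).comp hWsm.continuous
  -- base rows
  set rowM : Fin n → (Fin n → ℝ) → (Fin n → ℝ) :=
    fun i => if i ∈ s then gradRow i else fun _ => A i with hrowM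
  set rowM' : Fin n → (Fin n → ℝ) → ((Fin n → ℝ) →L[ℝ] (Fin n → ℝ)) :=
    fun i x => if i ∈ s then Ri i x else 0 with hrowM'
  have hrowMd : ∀ i x, HasFDerivAt (rowM i) (rowM' i x) x := by
    intro i x
    by_cases h : i ∈ s <;> simp only [hrowM, hrowM', if_pos, if_neg, h, if_true, if_false]
    · exact hRi i x
    · exact hasFDerivAt_const _ _
  have hrowMcont : ∀ i, Continuous (rowM i) := by
    intro i
    by_cases h : i ∈ s <;> simp only [hrowM, h, if_true, if_false]
    · exact hgradcont i
    · exact continuous_const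
  -- rows for the auxiliary determinants N j
  set rowN : Fin n → Fin n → (Fin n → ℝ) → (Fin n → ℝ) :=
    fun j i => if i = i₀ then (fun _ => Pi.single j 1) else rowM i with hrowN
  set rowN' : Fin n → Fin n → (Fin n → ℝ) → ((Fin n → ℝ) →L[ℝ] (Fin n → ℝ)) :=
    fun _j i x => if i = i₀ then 0 else rowM' i x with hrowN'
  have hrowNd : ∀ j i x, HasFDerivAt (rowN j i) (rowN' j i x) x := by
    intro j i x
    by_cases h : i = i₀ <;> simp only [hrowN, hrowN', h, if_true, if_false]
    · exact hasFDerivAt_const _ _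
    · exact hrowMd i x
  set Nf : Fin n → (Fin n → ℝ) → ℝ :=
    fun j x => Matrix.det (Matrix.of fun i => rowN j i x) with hNf
  set DN : Fin n → (Fin n → ℝ) → ((Fin n → ℝ) →L[ℝ] ℝ) := fun j x =>
    ((detCMM n).linearDeriv (fun i => rowN j i x)).comp
      (ContinuousLinearMap.pi (fun i => rowN' j i x)) with hDN
  have hNd : ∀ j x, HasFDerivAt (Nf j) (DN j x) x := fun j x =>
    hasFDerivAt_det_rows _ _ x (fun i => hrowNd j i x)
  have hNcont : ∀ j, Continuous (Nf j) := by
    intro j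
    have hA : Continuous fun x => Matrix.of (fun i => rowN j i x) := by
      apply continuous_matrix
      intro i k
      by_cases h : i = i₀ <;> simp only [hrowN, Matrix.of_apply, h, if_true, if_false]
      · exact continuous_const
      · exact (continuous_apply k).comp (hrowMcont i)
    exact hA.matrix_det
  -- the vector field F and its derivative
  set F : (Fin n → ℝ) → (Fin n → ℝ) := fun x j => V x i₀ * Nf j x with hF
  set dV : (Fin n → ℝ) → ((Fin n → ℝ) →L[ℝ] ℝ) :=
    fun x => (ContinuousLinearMap.proj i₀).comp (W x) with hdV
  have hVi₀d : ∀ x, HasFDerivAt (fun x => V x i₀) (dV x) x := by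
    intro x
    exact ((ContinuousLinearMap.proj (R := ℝ) (φ := fun _ : Fin n => ℝ)
      i₀).hasFDerivAt (x := V x)).comp x (hVd x)
  set F' : (Fin n → ℝ) → ((Fin n → ℝ) →L[ℝ] (Fin n → ℝ)) := fun x =>
    ContinuousLinearMap.pi fun j => V x i₀ • DN j x + Nf j x • dV x with hF'
  have hFd : ∀ x, HasFDerivAt F (F' x) x := fun x =>
    hasFDerivAt_pi.2 fun j => (hVi₀d x).mul (hNd j x)
  have hFcont : Continuous F :=
    continuous_pi fun j => ((continuous_apply i₀).comp hsm.continuous).mul (hNcont j)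
  -- symmetry of second derivative
  have hHsymm : ∀ (x : Fin n → ℝ) (u w : Fin n → ℝ), fderiv ℝ W x u w = fderiv ℝ W x w u :=
    fun x u w => second_derivative_symmetric hVd (hWd x) u w
  -- Piola identity
  have piola : ∀ x, (∑ j, DN j x (Pi.single j 1)) = 0 := by
    intro x
    have hterm : ∀ j, DN j x (Pi.single j 1)
        = ∑ i ∈ s.erase i₀, Matrix.det (Matrix.of
            (Function.update (fun i' => rowN j i' x) i (Ri i x (Pi.single j 1)))) := by
      intro j
      rw [hDN, det_deriv_apply]
      rw [← Finset.sum_subset (Finset.subset_univ (s.erase i₀)) ?hzero]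
      · refine Finset.sum_congr rfl fun i hi => ?_
        obtain ⟨hne, his⟩ := Finset.mem_erase.1 hi
        have : rowN' j i x = Ri i x := by simp [hrowN', hrowM', hne, his]
        rw [this]
      case hzero =>
        intro i _ hi
        have h0 : rowN' j i x = 0 := by
          by_cases h : i = i₀
          · simp [hrowN', h]
          · have his : i ∉ s := fun hs' => hi (Finset.mem_erase.2 ⟨h, hs'⟩)
            simp [hrowN', hrowM', h, his]
        apply Matrix.det_eq_zero_of_row_eq_zero i
        intro k
        simp [h0, Function.update_self]
    rw [Finset.sum_congr rfl fun j _ => hterm j, Finset.sum_comm]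
    apply Finset.sum_eq_zero
    intro i hi
    obtain ⟨hne, his⟩ := Finset.mem_erase.1 hi
    set base : Fin n → (Fin n → ℝ) := fun i' => rowM i' x with hbase
    have hrowNx : ∀ j, (fun i' => rowN j i' x) = Function.update base i₀ (Pi.single j 1) := by
      intro j; funext i'
      rw [Function.update_apply]
      by_cases h : i' = i₀ <;> simp [hrowN, h, hbase]
    set H : Fin n → Fin n → ℝ :=
      fun j k => fderiv ℝ W x (Pi.single j 1) (Pi.single k 1) i with hHdef
    set G : Fin n → Fin n → ℝ := fun j k =>
      Matrix.det (Matrix.of (Function.update (Function.update base i₀ (Pi.single j 1)) i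
        (Pi.single k 1))) with hGdef
    have hexp : ∀ j, Matrix.det (Matrix.of
        (Function.update (fun i' => rowN j i' x) i (Ri i x (Pi.single j 1))))
        = ∑ k, H j k * G j k := by
      intro j
      have hvec : Ri i x (Pi.single j 1) = ∑ k, H j k • (Pi.single k 1 : Fin n → ℝ) := by
        funext t
        have hL : Ri i x (Pi.single j 1) t = H j t := rfl
        rw [hL, Finset.sum_apply]
        simp [Pi.single_apply]
      rw [hrowNx j]
      have hφ : ∀ z, ((detCMM n).toMultilinearMap.toLinearMap
          (Function.update base i₀ (Pi.single j 1)) i) z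
          = Matrix.det (Matrix.of (Function.update (Function.update base i₀ (Pi.single j 1)) i z)) :=
        fun z => by
          rw [MultilinearMap.toLinearMap_apply, ContinuousMultilinearMap.coe_coe, detCMM_apply]
      rw [← hφ, hvec, map_sum]
      refine Finset.sum_congr rfl fun k _ => ?_
      rw [_root_.map_smul, hφ, smul_eq_mul]
    rw [Finset.sum_congr rfl fun j _ => hexp j]
    have hHsym : ∀ j k, H j k = H k j := by
      intro j k
      exact congrFun (hHsymm x (Pi.single j 1) (Pi.single k 1)) i
    have hGswap : ∀ j k, G k j = - G j k := by
      intro j k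
      have hswap : (Function.update (Function.update base i₀ (Pi.single j 1)) i (Pi.single k 1))
          ∘ (Equiv.swap i₀ i)
          = Function.update (Function.update base i₀ (Pi.single k 1)) i (Pi.single j 1) := by
        funext t
        rcases eq_or_ne t i₀ with rfl | ht₀
        · simp [Equiv.swap_apply_left, Function.update_apply, hne, Ne.symm hne]
        rcases eq_or_ne t i with rfl | hti
        · simp [Equiv.swap_apply_right, Function.update_apply, hne, Ne.symm hne]
        · simp [Equiv.swap_apply_of_ne_of_ne ht₀ hti, Function.update_apply, ht₀, hti]
      have hmsw := Matrix.detRowAlternating.map_swap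
        (v := Function.update (Function.update base i₀ (Pi.single j 1)) i (Pi.single k 1))
        (Ne.symm hne)
      rw [hswap] at hmsw
      exact hmsw
    have hS : (∑ j, ∑ k, H j k * G j k) = - (∑ j, ∑ k, H j k * G j k) := by
      conv_lhs => rw [Finset.sum_comm]
      have hstep : ∀ (k j : Fin n), H j k * G j k = - (H k j * G k j) := by
        intro k j
        rw [hHsym j k, hGswap k j, mul_neg]
      calc (∑ k, ∑ j, H j k * G j k) = ∑ k, ∑ j, - (H k j * G k j) := by
            exact Finset.sum_congr rfl fun k _ => Finset.sum_congr rfl fun j _ => hstep k j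
        _ = - ∑ k, ∑ j, H k j * G k j := by
            simp [Finset.sum_neg_distrib]
    linarith
  -- row expansion of the determinant (Claim 1)
  set detM : (Fin n → ℝ) → ℝ := fun x => Matrix.det (Matrix.of fun i => rowM i x) with hdetM
  have claim1 : ∀ x, (∑ j, Nf j x * (W x (Pi.single j 1) i₀)) = detM x := by
    intro x
    set M : Matrix (Fin n) (Fin n) ℝ := Matrix.of fun i => rowM i x with hM
    have h3 : (M * M.adjugate) i₀ i₀ = M.det := by
      rw [Matrix.mul_adjugate]
      simp [Matrix.smul_apply, Matrix.one_apply]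
    have h1 : detM x = ∑ j, M i₀ j * M.adjugate j i₀ := by
      rw [show detM x = M.det from rfl, ← h3, Matrix.mul_apply]
    rw [h1]
    refine Finset.sum_congr rfl fun j _ => ?_
    rw [Matrix.adjugate_apply]
    have hupd : M.updateRow i₀ (Pi.single j 1) = Matrix.of fun i => rowN j i x := by
      ext i k
      rw [Matrix.updateRow_apply]
      by_cases h : i = i₀ <;> simp [hrowN, h, hM]
    rw [hupd]
    have hMij : M i₀ j = W x (Pi.single j 1) i₀ := by
      simp [hM, hrowM, hi₀, hgradRow]
    rw [hMij, mul_comm]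
  -- the divergence of F is the determinant
  have div_eq : ∀ x, (∑ j, F' x (Pi.single j 1) j) = detM x := by
    intro x
    have h1 : ∀ j, F' x (Pi.single j 1) j
        = V x i₀ * DN j x (Pi.single j 1) + Nf j x * (W x (Pi.single j 1) i₀) := by
      intro j
      simp [hF', ContinuousLinearMap.pi_apply, ContinuousLinearMap.add_apply,
        ContinuousLinearMap.smul_apply, hdV, smul_eq_mul]
    rw [Finset.sum_congr rfl fun j _ => h1 j, Finset.sum_add_distrib, ← Finset.mul_sum,
      piola x, mul_zero, zero_add, claim1 x]
  have hdetMcont : Continuous detM := by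
    have hA : Continuous fun x => Matrix.of (fun i => rowM i x) := by
      apply continuous_matrix
      intro i k
      exact (continuous_apply k).comp (hrowMcont i)
    exact hA.matrix_det
  -- boundary vanishing
  have hbd : ∀ z : Fin n → ℝ, (∃ i, z i = 0 ∨ z i = 1) → F z = 0 := by
    rintro z ⟨i, hz⟩
    have hzs : z ∉ tsupport V := by
      intro hzt
      have := hsupp hzt i (Set.mem_univ i)
      rcases hz with h | h <;> rw [h] at this <;>
        simp [Set.mem_Ioo] at this
    have hV0 : V z = 0 := image_eq_zero_of_notMem_tsupport hzs
    funext j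
    simp [hF, hV0]
  -- the integrand equals detM
  have hintegrand : ∀ x : Fin n → ℝ, Matrix.det (Matrix.of fun i =>
      if i ∈ s then (fun j => W x (Pi.single j 1) i) else A i) = detM x := by
    intro x
    have hrows : (fun i => if i ∈ s then (fun j => W x (Pi.single j 1) i) else A i)
        = (fun i => rowM i x) := by
      funext i
      by_cases h : i ∈ s <;> simp [hrowM, h, hgradRow]
    rw [hdetM]
    exact congrArg (fun r => Matrix.det (Matrix.of r)) hrows
  rw [show (fun x => Matrix.det (Matrix.of fun i =>
      if i ∈ s then (fun j => W x (Pi.single j 1) i) else A i)) = detM from funext hintegrand]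
  -- apply the divergence theorem
  obtain ⟨d, rfl⟩ : ∃ d, n = d + 1 := ⟨n - 1, (Nat.succ_pred_eq_of_ne_zero hn).symm⟩
  have hle : (0 : Fin (d + 1) → ℝ) ≤ 1 := fun _ => zero_le_one
  have hdiveq : (fun x : Fin (d+1) → ℝ => ∑ i, F' x (Pi.single i 1) i) = detM := funext div_eq
  have Hi : IntegrableOn (fun x : Fin (d+1) → ℝ => ∑ i, F' x (Pi.single i 1) i)
      (Set.Icc 0 1) := by
    rw [hdiveq]
    exact hdetMcont.continuousOn.integrableOn_compact isCompact_Icc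
  have key := integral_divergence_of_hasFDerivAt_off_countable
    (0 : Fin (d+1) → ℝ) 1 hle F F' ∅ Set.countable_empty hFcont.continuousOn
    (fun x _ => hFd x) Hi
  rw [hdiveq] at key
  rw [key]
  apply Finset.sum_eq_zero
  intro i _
  have hfront : ∀ y : Fin d → ℝ, F (i.insertNth (1:ℝ) y) i = 0 := by
    intro y
    rw [hbd _ ⟨i, Or.inr (by simp [Fin.insertNth_apply_same])⟩]
    rfl
  have hback : ∀ y : Fin d → ℝ, F (i.insertNth (0:ℝ) y) i = 0 := by
    intro y
    rw [hbd _ ⟨i, Or.inl (by simp [Fin.insertNth_apply_same])⟩]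
    rfl
  simp [hfront, hback]

lemma main_pi (n : ℕ) (hn : n ≠ 0) (V : (Fin n → ℝ) → (Fin n → ℝ))
    (hsm : ContDiff ℝ (⊤ : ℕ∞) V)
    (hsupp : tsupport V ⊆ Set.pi Set.univ fun _ => Set.Ioo (0:ℝ) 1)
    (A : Matrix (Fin n) (Fin n) ℝ) :
    ∫ x in Set.Icc (0 : Fin n → ℝ) 1,
      Matrix.det (Matrix.of fun i j => A i j + fderiv ℝ V x (Pi.single j 1) i) = A.det := by
  classical
  have hJcont : ∀ (i k : Fin n), Continuous fun x => fderiv ℝ V x (Pi.single k 1) i := by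
    intro i k
    have hW' : ContDiff ℝ (⊤ : ℕ∞) (fderiv ℝ V) := hsm.fderiv_right (by simp)
    have hW : Continuous (fderiv ℝ V) := hW'.continuous
    exact ((continuous_apply i).comp
      ((ContinuousLinearMap.apply ℝ (Fin n → ℝ) (Pi.single k 1)).continuous)).comp hW
  have hdecomp : ∀ x : Fin n → ℝ,
      Matrix.det (Matrix.of fun i j => A i j + fderiv ℝ V x (Pi.single j 1) i)
      = ∑ t : Finset (Fin n), Matrix.det (Matrix.of
          (t.piecewise (fun i k => fderiv ℝ V x (Pi.single k 1) i) (fun i => A i))) := by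
    intro x
    have h0 : (fun i k => A i k + fderiv ℝ V x (Pi.single k 1) i)
        = (fun (i : Fin n) (k : Fin n) => fderiv ℝ V x (Pi.single k 1) i)
          + (fun i : Fin n => (A i : Fin n → ℝ)) := by
      funext i k
      simp [add_comm]
    rw [show (Matrix.of fun i k => A i k + fderiv ℝ V x (Pi.single k 1) i)
        = Matrix.of ((fun (i : Fin n) (k : Fin n) => fderiv ℝ V x (Pi.single k 1) i)
          + (fun i : Fin n => (A i : Fin n → ℝ))) from congrArg _ h0]
    exact MultilinearMap.map_add_univ
      (Matrix.detRowAlternating (R := ℝ) (n := Fin n)).toMultilinearMap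
      (fun i k => fderiv ℝ V x (Pi.single k 1) i) (fun i => (A i))
  simp only [hdecomp]
  have hint : ∀ t : Finset (Fin n), IntegrableOn (fun x => Matrix.det (Matrix.of
      (t.piecewise (fun i k => fderiv ℝ V x (Pi.single k 1) i) (fun i => A i))))
      (Set.Icc (0 : Fin n → ℝ) 1) := by
    intro t
    apply ContinuousOn.integrableOn_compact isCompact_Icc
    apply Continuous.continuousOn
    apply Continuous.matrix_det
    apply continuous_matrix
    intro i k
    by_cases h : i ∈ t
    · simpa [Matrix.of_apply, Finset.piecewise_eq_of_mem _ _ _ h] using hJcont i k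
    · simp only [Matrix.of_apply, Finset.piecewise_eq_of_notMem _ _ _ h]
      exact continuous_const
  rw [integral_finset_sum _ (fun t _ => hint t)]
  rw [Finset.sum_eq_single_of_mem ∅ (Finset.mem_univ _)]
  · rw [show (fun x : Fin n → ℝ => Matrix.det (Matrix.of
        ((∅ : Finset (Fin n)).piecewise (fun i k => fderiv ℝ V x (Pi.single k 1) i)
          (fun i => A i)))) = fun _ => A.det from ?_]
    · rw [setIntegral_const]
      have hvol : volume (Set.Icc (0 : Fin n → ℝ) 1) = 1 := by
        rw [Real.volume_Icc_pi]
        simp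
      rw [measureReal_def, hvol]
      simp
    · funext x
      rw [Finset.piecewise_empty]
      rfl
  · intro t _ ht
    obtain ⟨i₀, hi₀⟩ := Finset.nonempty_iff_ne_empty.2 ht
    have heq : ∀ x : Fin n → ℝ, Matrix.det (Matrix.of
        (t.piecewise (fun i k => fderiv ℝ V x (Pi.single k 1) i) (fun i => A i)))
        = Matrix.det (Matrix.of fun i =>
          if i ∈ t then (fun j => fderiv ℝ V x (Pi.single j 1) i) else A i) := by
      intro x
      apply congrArg (fun r => Matrix.det (Matrix.of r))
      funext i
      by_cases h : i ∈ t
      · rw [Finset.piecewise_eq_of_mem _ _ _ h, if_pos h]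
      · rw [Finset.piecewise_eq_of_notMem _ _ _ h, if_neg h]
    simp only [heq]
    exact key_vanish n hn V hsm hsupp A t i₀ hi₀

/-- the determinant is a null Lagrangian:
`∫_{(0,1)^n} det(A + Dv(x)) dx = det A` for smooth `v` compactly supported in `(0,1)^n`. -/
theorem statement13 (n : ℕ) (hn : 1 ≤ n) (A : Matrix (Fin n) (Fin n) ℝ)
    (v : EuclideanSpace ℝ (Fin n) → EuclideanSpace ℝ (Fin n))
    (hsm : ContDiff ℝ (⊤ : ℕ∞) v) (hcs : HasCompactSupport v) (hsupp : tsupport v ⊆ unitCube n) :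
    ∫ x in unitCube n, (A + jac v x).det = A.det := by
  classical
  set e : EuclideanSpace ℝ (Fin n) ≃L[ℝ] (Fin n → ℝ) := EuclideanSpace.equiv (Fin n) ℝ with he
  set V : (Fin n → ℝ) → (Fin n → ℝ) := fun y => e (v (e.symm y)) with hV
  have hsmV : ContDiff ℝ (⊤ : ℕ∞) V := by
    exact (e.toContinuousLinearMap.contDiff.comp hsm).comp e.symm.toContinuousLinearMap.contDiff
  have happly : ∀ (u : EuclideanSpace ℝ (Fin n)) (i : Fin n), e u i = u i := fun _ _ => rfl
  have hsingle : ∀ j : Fin n, e.symm (Pi.single j 1) = EuclideanSpace.single j (1:ℝ) :=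
    fun j => rfl
  have hsuppV : tsupport V ⊆ Set.pi Set.univ fun _ => Set.Ioo (0:ℝ) 1 := by
    have h1 : Function.support V ⊆ ⇑e '' tsupport v := by
      intro z hz
      have hv : v (e.symm z) ≠ 0 := by
        intro h0
        apply hz
        rw [hV]
        simp only [h0, map_zero]
      exact ⟨e.symm z, subset_tsupport v hv, (e.apply_symm_apply z)⟩
    have h2 : tsupport V ⊆ ⇑e '' tsupport v := by
      have hcl : IsClosed (⇑e '' tsupport v) := by
        rw [ContinuousLinearEquiv.image_eq_preimage_symm]
        exact (isClosed_tsupport v).preimage e.symm.continuous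
      exact closure_minimal h1 hcl
    intro z hz
    obtain ⟨w, hw, rfl⟩ := h2 hz
    intro i _
    have := hsupp hw i
    rwa [happly]
  have hmain := main_pi n (by omega) V hsmV hsuppV A
  -- derivative transfer
  have hder : ∀ (x : EuclideanSpace ℝ (Fin n)) (i j : Fin n),
      fderiv ℝ V (e x) (Pi.single j 1) i = fderiv ℝ v x (EuclideanSpace.single j 1) i := by
    intro x i j
    have hVc : V = ⇑e ∘ (v ∘ ⇑e.symm) := rfl
    have h1 : fderiv ℝ V (e x) = e.toContinuousLinearMap.comp
        ((fderiv ℝ v (e.symm (e x))).comp e.symm.toContinuousLinearMap) := by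
      rw [hVc, ContinuousLinearEquiv.comp_fderiv, ContinuousLinearEquiv.comp_right_fderiv]
    rw [h1, e.symm_apply_apply]
    simp only [ContinuousLinearMap.coe_comp', Function.comp_apply,
      ContinuousLinearEquiv.coe_coe]
    rw [hsingle j]
    rw [happly]
  -- measure transfer
  have hmp := EuclideanSpace.volume_preserving_symm_measurableEquiv_toLp (Fin n)
  have hemb : MeasurableEmbedding ((MeasurableEquiv.toLp 2 (Fin n → ℝ)).symm) :=
    ((MeasurableEquiv.toLp 2 (Fin n → ℝ)).symm).measurableEmbedding
  have hphieq : ∀ x : EuclideanSpace ℝ (Fin n),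
      ((MeasurableEquiv.toLp 2 (Fin n → ℝ)).symm) x = e x := fun _ => rfl
  have htrans := hmp.setIntegral_preimage_emb hemb
    (fun y => Matrix.det (Matrix.of fun i j => A i j + fderiv ℝ V y (Pi.single j 1) i))
    (Set.pi Set.univ fun _ => Set.Ioo (0:ℝ) 1)
  have hpre : ((MeasurableEquiv.toLp 2 (Fin n → ℝ)).symm) ⁻¹'
      (Set.pi Set.univ fun _ => Set.Ioo (0:ℝ) 1) = unitCube n := by
    ext x
    refine ⟨fun hx i => ?_, fun hx i _ => ?_⟩
    · have h2 := hx i (Set.mem_univ i)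
      rwa [hphieq, happly] at h2
    · rw [hphieq, happly]
      exact hx i
  rw [hpre] at htrans
  have hfun : ∀ x : EuclideanSpace ℝ (Fin n),
      Matrix.det (Matrix.of fun i j => A i j
        + fderiv ℝ V (((MeasurableEquiv.toLp 2 (Fin n → ℝ)).symm) x) (Pi.single j 1) i)
      = (A + jac v x).det := by
    intro x
    congr 1
    ext i j
    simp only [Matrix.of_apply, Matrix.add_apply]
    rw [hphieq, hder x i j]
    simp [jac]
  calc ∫ x in unitCube n, (A + jac v x).det
      = ∫ x in unitCube n, Matrix.det (Matrix.of fun i j => A i j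
          + fderiv ℝ V (((MeasurableEquiv.toLp 2 (Fin n → ℝ)).symm) x) (Pi.single j 1) i) := by
        have hmeas : MeasurableSet (unitCube n) := by
          rw [← hpre]
          exact ((MeasurableEquiv.toLp 2 (Fin n → ℝ)).symm).measurable
            (MeasurableSet.univ_pi fun _ => measurableSet_Ioo)
        refine setIntegral_congr_fun hmeas fun x _ => (hfun x).symm
    _ = ∫ y in Set.pi Set.univ fun _ => Set.Ioo (0:ℝ) 1,
          Matrix.det (Matrix.of fun i j => A i j + fderiv ℝ V y (Pi.single j 1) i) := htrans
    _ = ∫ y in Set.Icc (0 : Fin n → ℝ) 1,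
          Matrix.det (Matrix.of fun i j => A i j + fderiv ℝ V y (Pi.single j 1) i) := by
        apply setIntegral_congr_set
        exact MeasureTheory.Measure.univ_pi_Ioo_ae_eq_Icc
    _ = A.det := hmain
end
end

section
/- Let A ∈ ℝ^{3×3} and let v : ℝ³ → ℝ³ be a smooth (C^∞) map with compact support contained in the open unit cube (0,1)³. Then ∫_{(0,1)³} cof(A + Dv(x)) dx = cof A, where the integral is taken entrywise and Dv(x) is the Jacobian matrix of v at x. -/
open MeasureTheory Metric
open scoped ENNReal

noncomputable section

abbrev E3 := EuclideanSpace ℝ (Fin 3)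

lemma my_integral_fderiv_eq_zero {f : E3 → ℝ} (hf : ContDiff ℝ (⊤ : ℕ∞) f)
    (hc : HasCompactSupport f) (w : E3) :
    ∫ x, fderiv ℝ f x w = 0 := by
  obtain ⟨C, hC⟩ := ContDiff.lipschitzWith_of_hasCompactSupport hc hf (by simp)
  have h := LipschitzWith.integral_lineDeriv_mul_eq (μ := volume)
      (LipschitzWith.const' (K := 0) (1:ℝ)) hC hc (-w)
  have hconst : ∀ x : E3, lineDeriv ℝ (fun _ : E3 => (1:ℝ)) x (-w) = 0 := fun x => by
    rw [(differentiableAt_const (1:ℝ)).lineDeriv_eq_fderiv]; simp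
  have h2 : ∀ x, lineDeriv ℝ f x w = fderiv ℝ f x w := fun x =>
    (hf.differentiable (by simp) x).lineDeriv_eq_fderiv
  simp only [hconst, zero_mul, integral_zero, neg_neg, mul_one, h2] at h
  exact h.symm


lemma my_ibp {f g : E3 → ℝ} (hf : ContDiff ℝ (⊤ : ℕ∞) f) (hcf : HasCompactSupport f)
    (hg : ContDiff ℝ (⊤ : ℕ∞) g) (hcg : HasCompactSupport g) (w : E3) :
    ∫ x, fderiv ℝ f x w * g x = - ∫ x, fderiv ℝ g x w * f x := by
  obtain ⟨C, hC⟩ := ContDiff.lipschitzWith_of_hasCompactSupport hcf hf (by simp)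
  obtain ⟨D, hD⟩ := ContDiff.lipschitzWith_of_hasCompactSupport hcg hg (by simp)
  have h := LipschitzWith.integral_lineDeriv_mul_eq (μ := volume) hC hD hcg w
  have h2 : ∀ x, lineDeriv ℝ f x w = fderiv ℝ f x w := fun x =>
    (hf.differentiable (by simp) x).lineDeriv_eq_fderiv
  have h3 : ∀ x, lineDeriv ℝ g x (-w) = - fderiv ℝ g x w := fun x => by
    rw [(hg.differentiable (by simp) x).lineDeriv_eq_fderiv]; simp
  simp only [h2, h3, neg_mul] at h
  rw [h, integral_neg]

lemma fderiv_apply_contDiff {g : E3 → ℝ} (hg : ContDiff ℝ (⊤ : ℕ∞) g) (w : E3) :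
    ContDiff ℝ (⊤ : ℕ∞) (fun x => fderiv ℝ g x w) :=
  (ContinuousLinearMap.apply ℝ ℝ w).contDiff.comp (hg.fderiv_right (by simp))

lemma fderiv_apply_compactSupport {g : E3 → ℝ} (hcg : HasCompactSupport g) (w : E3) :
    HasCompactSupport (fun x => fderiv ℝ g x w) :=
  (hcg.fderiv ℝ).comp_left (g := fun L : E3 →L[ℝ] ℝ => L w) rfl

lemma my_quad {f g : E3 → ℝ} (hf : ContDiff ℝ (⊤ : ℕ∞) f) (hcf : HasCompactSupport f)
    (hg : ContDiff ℝ (⊤ : ℕ∞) g) (hcg : HasCompactSupport g) (w₁ w₂ : E3) :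
    ∫ x, (fderiv ℝ f x w₁ * fderiv ℝ g x w₂ - fderiv ℝ f x w₂ * fderiv ℝ g x w₁) = 0 := by
  set g₁ : E3 → ℝ := fun x => fderiv ℝ g x w₁ with hg₁
  set g₂ : E3 → ℝ := fun x => fderiv ℝ g x w₂ with hg₂
  have hsg₁ := fderiv_apply_contDiff hg w₁
  have hsg₂ := fderiv_apply_contDiff hg w₂
  have hcg₁ := fderiv_apply_compactSupport hcg w₁
  have hcg₂ := fderiv_apply_compactSupport hcg w₂
  have hsymm : ∀ x, fderiv ℝ g₂ x w₁ = fderiv ℝ g₁ x w₂ := by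
    intro x
    have hD : DifferentiableAt ℝ (fderiv ℝ g) x :=
      ((hg.fderiv_right (m := 1) (WithTop.coe_le_coe.mpr le_top)).differentiable one_ne_zero) x
    have e₂ : HasFDerivAt g₂
        ((ContinuousLinearMap.apply ℝ ℝ w₂).comp (fderiv ℝ (fderiv ℝ g) x)) x :=
      (ContinuousLinearMap.apply ℝ ℝ w₂).hasFDerivAt.comp x hD.hasFDerivAt
    have e₁ : HasFDerivAt g₁
        ((ContinuousLinearMap.apply ℝ ℝ w₁).comp (fderiv ℝ (fderiv ℝ g) x)) x :=
      (ContinuousLinearMap.apply ℝ ℝ w₁).hasFDerivAt.comp x hD.hasFDerivAt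
    rw [e₂.fderiv, e₁.fderiv]
    exact (hg.contDiffAt.isSymmSndFDerivAt (by rw [minSmoothness_of_isRCLikeNormedField]; exact WithTop.coe_le_coe.mpr le_top)) w₁ w₂
  have H1 := my_ibp hf hcf hsg₂ hcg₂ w₁
  have H2 := my_ibp hf hcf hsg₁ hcg₁ w₂
  have cf₁ : Continuous (fun x => fderiv ℝ f x w₁) := (fderiv_apply_contDiff hf w₁).continuous
  have cf₂ : Continuous (fun x => fderiv ℝ f x w₂) := (fderiv_apply_contDiff hf w₂).continuous
  have I1 : Integrable (fun x => fderiv ℝ f x w₁ * g₂ x) :=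
    (cf₁.mul hsg₂.continuous).integrable_of_hasCompactSupport (hcg₂.mul_left)
  have I2 : Integrable (fun x => fderiv ℝ f x w₂ * g₁ x) :=
    (cf₂.mul hsg₁.continuous).integrable_of_hasCompactSupport (hcg₁.mul_left)
  rw [integral_sub I1 I2, H1, H2]
  have he : ∀ x, fderiv ℝ g₂ x w₁ * f x = fderiv ℝ g₁ x w₂ * f x := fun x => by rw [hsymm]
  simp only [hg₁, hg₂] at he
  simp only [he]
  ring

lemma cof_eq (B : Matrix (Fin 3) (Fin 3) ℝ) (i j : Fin 3) :
    cof B i j = B (i+1) (j+1) * B (i+2) (j+2) - B (i+1) (j+2) * B (i+2) (j+1) := by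
  fin_cases i <;> fin_cases j <;>
    simp [cof, Matrix.adjugate_fin_three, Matrix.transpose_apply] <;> ring

lemma volume_unitCube : volume (unitCube 3) = 1 := by
  have hmp := EuclideanSpace.volume_preserving_symm_measurableEquiv_toLp (Fin 3)
  have he : unitCube 3 =
      (MeasurableEquiv.toLp 2 (Fin 3 → ℝ)).symm ⁻¹' (Set.univ.pi fun _ => Set.Ioo (0:ℝ) 1) := by
    ext x
    simp [unitCube, Set.mem_pi]
  rw [he, hmp.measure_preimage
    (MeasurableSet.univ_pi fun _ => measurableSet_Ioo).nullMeasurableSet]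
  rw [volume_pi_pi]
  simp

/-- the cofactor matrix is a null Lagrangian (entrywise):
`∫_{(0,1)³} cof(A + Dv(x)) dx = cof A` for smooth `v` compactly supported in `(0,1)³`. -/
theorem statement14 (A : Matrix (Fin 3) (Fin 3) ℝ)
    (v : EuclideanSpace ℝ (Fin 3) → EuclideanSpace ℝ (Fin 3))
    (hsm : ContDiff ℝ (⊤ : ℕ∞) v) (hcs : HasCompactSupport v) (hsupp : tsupport v ⊆ unitCube 3) :
    ∀ i j : Fin 3, ∫ x in unitCube 3, cof (A + jac v x) i j = cof A i j := by
  intro i j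
  have hcube_meas : MeasurableSet (unitCube 3) := by
    have : unitCube 3 = ⋂ k : Fin 3, (fun x : E3 => x k) ⁻¹' Set.Ioo (0:ℝ) 1 := by
      ext x; simp [unitCube]
    rw [this]
    exact MeasurableSet.iInter fun k =>
      ((EuclideanSpace.proj k : E3 →L[ℝ] ℝ).continuous.measurable) measurableSet_Ioo
  -- coordinate functions
  set u : Fin 3 → E3 → ℝ := fun k x => v x k with hu
  have husm : ∀ k, ContDiff ℝ (⊤ : ℕ∞) (u k) := fun k =>
    (EuclideanSpace.proj k : E3 →L[ℝ] ℝ).contDiff.comp hsm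
  have hucs : ∀ k, HasCompactSupport (u k) := fun k =>
    hcs.comp_left (g := fun y : E3 => y k) rfl
  set G : Fin 3 → Fin 3 → E3 → ℝ :=
    fun k l x => fderiv ℝ (u k) x (EuclideanSpace.single l 1) with hG
  have hjac : ∀ x k l, jac v x k l = G k l x := by
    intro x k l
    have hd : HasFDerivAt (u k) ((EuclideanSpace.proj k : E3 →L[ℝ] ℝ).comp (fderiv ℝ v x)) x :=
      (EuclideanSpace.proj k : E3 →L[ℝ] ℝ).hasFDerivAt.comp x
        ((hsm.differentiable (by simp)) x).hasFDerivAt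
    simp only [hG, hd.fderiv]
    rfl
  have hGc : ∀ k l, Continuous (G k l) := fun k l =>
    (fderiv_apply_contDiff (husm k) _).continuous
  have hGcs : ∀ k l, HasCompactSupport (G k l) := fun k l =>
    fderiv_apply_compactSupport (hucs k) _
  have hGint : ∀ k l, Integrable (G k l) := fun k l =>
    (hGc k l).integrable_of_hasCompactSupport (hGcs k l)
  have hGzero : ∀ k l x, x ∉ unitCube 3 → G k l x = 0 := by
    intro k l x hx
    have hxv : x ∉ tsupport (u k) := by
      intro hmem
      exact hx (hsupp (closure_mono (Function.support_subset_iff.2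
        (fun y hy => fun h0 => hy (by simp [hu, h0]))) hmem))
    have hz : fderiv ℝ (u k) x = 0 := by
      by_contra hcon
      exact hxv (support_fderiv_subset ℝ (Function.mem_support.2 hcon))
    simp [hG, hz]
  set a := i + 1 with ha
  set b := i + 2 with hb
  set c := j + 1 with hc
  set d := j + 2 with hd
  set h : E3 → ℝ := fun x =>
    A a c * G b d x + A b d * G a c x - A a d * G b c x - A b c * G a d x +
      (G a c x * G b d x - G a d x * G b c x) with hh
  have hpt : ∀ x, cof (A + jac v x) i j = cof A i j + h x := by
    intro x
    rw [cof_eq, cof_eq]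
    simp only [Matrix.add_apply, hjac, hh]
    ring
  have Ilin1 := (hGint b d).const_mul (A a c)
  have Ilin2 := (hGint a c).const_mul (A b d)
  have Ilin3 := (hGint b c).const_mul (A a d)
  have Ilin4 := (hGint a d).const_mul (A b c)
  have Iq1 : Integrable (fun x => G a c x * G b d x) :=
    ((hGc a c).mul (hGc b d)).integrable_of_hasCompactSupport (hGcs a c).mul_right
  have Iq2 : Integrable (fun x => G a d x * G b c x) :=
    ((hGc a d).mul (hGc b c)).integrable_of_hasCompactSupport (hGcs a d).mul_right
  have hIq : Integrable (fun x => G a c x * G b d x - G a d x * G b c x) := Iq1.sub Iq2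
  have Ilin12 : Integrable (fun x => A a c * G b d x + A b d * G a c x) := Ilin1.add Ilin2
  have Ilin123 : Integrable (fun x => A a c * G b d x + A b d * G a c x - A a d * G b c x) :=
    Ilin12.sub Ilin3
  have Ilin1234 : Integrable
      (fun x => A a c * G b d x + A b d * G a c x - A a d * G b c x - A b c * G a d x) :=
    Ilin123.sub Ilin4
  have hIh : Integrable h := Ilin1234.add hIq
  have hvol : volume (unitCube 3) = 1 := volume_unitCube
  have step1 : ∫ x in unitCube 3, cof (A + jac v x) i j
      = (∫ _x in unitCube 3, cof A i j) + ∫ x in unitCube 3, h x := by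
    refine (setIntegral_congr_fun hcube_meas (fun x _ => hpt x)).trans (integral_add ?_ ?_)
    · exact integrableOn_const (by rw [hvol]; exact ENNReal.one_ne_top)
    · exact hIh.integrableOn
  have step2 : (∫ _x in unitCube 3, cof A i j) = cof A i j := by
    rw [setIntegral_const, measureReal_def, hvol]; simp
  have step3 : ∫ x in unitCube 3, h x = ∫ x, h x :=
    setIntegral_eq_integral_of_forall_compl_eq_zero (fun x hx => by
      simp [hh, hGzero _ _ x hx])
  have hlin : ∀ k l, ∫ x, G k l x = 0 := fun k l =>
    my_integral_fderiv_eq_zero (husm k) (hucs k) _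
  have hquad : ∫ x, (G a c x * G b d x - G a d x * G b c x) = 0 :=
    my_quad (husm a) (hucs a) (husm b) (hucs b) _ _
  have L1 : ∫ x, A a c * G b d x = 0 := by rw [integral_const_mul, hlin, mul_zero]
  have L2 : ∫ x, A b d * G a c x = 0 := by rw [integral_const_mul, hlin, mul_zero]
  have L3 : ∫ x, A a d * G b c x = 0 := by rw [integral_const_mul, hlin, mul_zero]
  have L4 : ∫ x, A b c * G a d x = 0 := by rw [integral_const_mul, hlin, mul_zero]
  have S1 : ∫ x, (A a c * G b d x + A b d * G a c x) = 0 := by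
    rw [integral_add Ilin1 Ilin2, L1, L2, add_zero]
  have S2 : ∫ x, (A a c * G b d x + A b d * G a c x - A a d * G b c x) = 0 := by
    rw [integral_sub Ilin12 Ilin3, S1, L3, sub_zero]
  have S3 : ∫ x, (A a c * G b d x + A b d * G a c x - A a d * G b c x - A b c * G a d x) = 0 := by
    rw [integral_sub Ilin123 Ilin4, S2, L4, sub_zero]
  have step4 : ∫ x, h x = 0 := by
    have : ∫ x, h x
        = (∫ x, (A a c * G b d x + A b d * G a c x - A a d * G b c x - A b c * G a d x))
          + ∫ x, (G a c x * G b d x - G a d x * G b c x) :=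
      integral_add Ilin1234 hIq
    rw [this, S3, hquad, add_zero]
  rw [step1, step2, step3, step4, add_zero]
end
end
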